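/- arXiv:2008.04282 — 13 statements merged into one kernel-verified Lean document; each statement's English description precedes it below -/
import Mathlib

section
/- For a connected graph G, the strong dimension of G equals the vertex covering number of its strong resolving graph, i.e., β_s(G) = α(G_SR). -/
open SimpleGraph

/-- The strong product of `k` copies of the path `P_n` (vertices labeled `0,…,n-1`). -/
def strongPow (n k : ℕ) : SimpleGraph (Fin k → Fin n) where
  Adj x y := x ≠ y ∧ ∀ i, ((x i : ℤ) - (y i : ℤ)).natAbs ≤ 1
  symm := ⟨fun x y h => ⟨h.1.symm, fun i => by have := h.2 i; omega⟩⟩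
  loopless := ⟨fun x h => h.1 rfl⟩

/-- `w` strongly resolves `u` and `v`: `v` lies on a shortest `u`–`w` path or
`u` lies on a shortest `v`–`w` path. -/
def stronglyResolves {V : Type*} (G : SimpleGraph V) (w u v : V) : Prop :=
  G.dist u w = G.dist u v + G.dist v w ∨ G.dist v w = G.dist v u + G.dist u w

/-- `W` is a strong resolving set of `G`. -/
def isStrongResolvingSet {V : Type*} (G : SimpleGraph V) (W : Set V) : Prop :=
  ∀ u v : V, u ≠ v → ∃ w ∈ W, stronglyResolves G w u v

/-- The strong dimension `β_s(G)`. -/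
noncomputable def strongDim (V : Type*) [Fintype V] (G : SimpleGraph V) : ℕ :=
  sInf {n | ∃ W : Finset V, W.card = n ∧ isStrongResolvingSet G ↑W}

/-- `u` and `v` are mutually maximally distant in `G`. -/
def mutuallyMaxDistant {V : Type*} (G : SimpleGraph V) (u v : V) : Prop :=
  (∀ x, G.Adj v x → G.dist u x ≤ G.dist u v) ∧ (∀ x, G.Adj u x → G.dist v x ≤ G.dist v u)

/-- The strong resolving graph `G_SR`. -/
def strongResolvingGraph {V : Type*} (G : SimpleGraph V) : SimpleGraph V where
  Adj u v := u ≠ v ∧ mutuallyMaxDistant G u v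
  symm := ⟨fun u v h => ⟨h.1.symm, h.2.2, h.2.1⟩⟩
  loopless := ⟨fun u h => h.1 rfl⟩

/-- The vertex covering number `α(H)`. -/
noncomputable def coverNumber (V : Type*) [Fintype V] (H : SimpleGraph V) : ℕ :=
  sInf {n | ∃ C : Finset V, C.card = n ∧ ∀ u v, H.Adj u v → u ∈ C ∨ v ∈ C}

/-- The threshold strong dimension `τ_s(G)`. -/
noncomputable def thresholdStrongDim (V : Type*) [Fintype V] (G : SimpleGraph V) : ℕ :=
  sInf {n | ∃ H : SimpleGraph V, G ≤ H ∧
    ∃ W : Finset V, W.card = n ∧ isStrongResolvingSet H ↑W}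

/-- A `W`-resolved embedding of `G` in the strong product of `k` copies of `P_{D+1}`,
where `W` is enumerated by `w : Fin k → V`.  The induced subgraph `φ(G)` is represented
by the comap (pullback) of the strong product along the injective map `φ`. -/
def IsWResolvedEmbedding {V : Type*} (G : SimpleGraph V) (D k : ℕ) (w : Fin k → V)
    (φ : V → (Fin k → Fin (D + 1))) : Prop :=
  Function.Injective φ ∧
  (∀ u v, G.Adj u v → (strongPow (D + 1) k).Adj (φ u) (φ v)) ∧
  ∀ x i, ((φ x i : ℕ)) = (SimpleGraph.comap φ (strongPow (D + 1) k)).dist x (w i)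

/-- The image `φ(G)` is an isometric subgraph of the strong product. -/
def IsIsometricImage {V : Type*} (D k : ℕ) (φ : V → (Fin k → Fin (D + 1))) : Prop :=
  ∀ u v, (SimpleGraph.comap φ (strongPow (D + 1) k)).dist u v
      = (strongPow (D + 1) k).dist (φ u) (φ v)

/-- `W` is a (metric) resolving set of `G`. -/
def isResolvingSet {V : Type*} (G : SimpleGraph V) (W : Set V) : Prop :=
  ∀ u v : V, u ≠ v → ∃ w ∈ W, G.dist u w ≠ G.dist v w

/-- The metric dimension `β(G)`. -/
noncomputable def metricDim (V : Type*) [Fintype V] (G : SimpleGraph V) : ℕ :=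
  sInf {n | ∃ W : Finset V, W.card = n ∧ isResolvingSet G ↑W}

/-!
A vertex `w` can strongly resolve a mutually maximally distant pair `u, v` only if `w` is `u` or
`v`: a geodesic from `u` through `v` to any other `w` would leave `v` through a neighbour farther
from `u`. Hence every strong resolving set is a vertex cover of `G_SR`. Conversely, any pair
`u ≠ v` extends to a mutually maximally distant pair `u', v'` with `u` on a geodesic from `v`
to `u'` and `v` on a geodesic from `u` to `v'` (push `u` away from `v` as far as possible, then
`v` away from `u'`), so whichever of `u', v'` lies in a vertex cover strongly resolves `u, v`.
-/

namespace SimpleGraph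

variable {V : Type*} {G : SimpleGraph V}

/-- `v` is maximally distant from `u`. -/
def IsMaxDistant (G : SimpleGraph V) (u v : V) : Prop :=
  ∀ x, G.Adj v x → G.dist u x ≤ G.dist u v

lemma Connected.exists_adj_dist_add_one_eq (hG : G.Connected) {c w : V} (hcw : c ≠ w) :
    ∃ x, G.Adj c x ∧ G.dist x w + 1 = G.dist c w := by
  obtain ⟨p, hp⟩ := hG.exists_walk_length_eq_dist c w
  cases p with
  | nil => exact absurd rfl hcw
  | @cons _ x _ hadj q =>
    have hq : G.dist x w ≤ q.length := dist_le q
    have hxc : G.dist c w ≤ 1 + G.dist x w :=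
      (dist_eq_one_iff_adj.mpr hadj) ▸ hG.dist_triangle
    rw [Walk.length_cons] at hp
    exact ⟨x, hadj, by omega⟩

lemma IsMaxDistant.eq_of_dist_eq_add (hG : G.Connected) {a c w : V} (hc : G.IsMaxDistant a c)
    (h : G.dist a w = G.dist a c + G.dist c w) : w = c := by
  by_contra hwc
  obtain ⟨x, hcx, hx⟩ := hG.exists_adj_dist_add_one_eq (Ne.symm hwc)
  have hax : G.dist a x ≤ G.dist a c := hc x hcx
  have htri : G.dist a w ≤ G.dist a x + G.dist x w := hG.dist_triangle
  omega

/-- Among the vertices `a'` with `a` on a geodesic from `b` to `a'`, one farthest from `b` is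
maximally distant from `b`. -/
lemma Connected.exists_isMaxDistant_dist_eq_add [Finite V] (hG : G.Connected) (b a : V) :
    ∃ a', G.IsMaxDistant b a' ∧ G.dist b a' = G.dist b a + G.dist a a' := by
  let S : Set V := {x | G.dist b x = G.dist b a + G.dist a x}
  have haS : a ∈ S := by simp [S]
  obtain ⟨a', ha'S, hmax⟩ := S.exists_max_image (G.dist b) S.toFinite ⟨a, haS⟩
  refine ⟨a', fun x ha'x => ?_, ha'S⟩
  by_contra! hfar
  have hd : G.dist a' x = 1 := dist_eq_one_iff_adj.mpr ha'x
  have hbx : G.dist b x ≤ G.dist b a' + G.dist a' x := hG.dist_triangle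
  have hax : G.dist a x ≤ G.dist a a' + G.dist a' x := hG.dist_triangle
  have hbx' : G.dist b x ≤ G.dist b a + G.dist a x := hG.dist_triangle
  have hxS : x ∈ S := by simp only [S, Set.mem_ofPred_eq] at ha'S ⊢; omega
  exact absurd (hmax x hxS) (not_le.mpr hfar)

lemma Connected.exists_adj_strongResolvingGraph_stronglyResolves [Finite V] (hG : G.Connected)
    {u v : V} (huv : u ≠ v) :
    ∃ u' v', (strongResolvingGraph G).Adj u' v' ∧
      stronglyResolves G u' u v ∧ stronglyResolves G v' u v := by
  obtain ⟨u', hu'max, hu'⟩ := hG.exists_isMaxDistant_dist_eq_add v u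
  obtain ⟨v', hv'max, hv'⟩ := hG.exists_isMaxDistant_dist_eq_add u' v
  have hvu : 0 < G.dist v u := hG.pos_dist_of_ne huv.symm
  have hu'v : G.dist u' v = G.dist v u' := dist_comm
  have hne : u' ≠ v' := by
    rintro rfl
    rw [dist_self] at hv'
    omega
  have hu'max' : G.IsMaxDistant v' u' := fun x hx => by
    have h1 : G.dist v x ≤ G.dist v u' := hu'max x hx
    have h2 : G.dist v' x ≤ G.dist v' v + G.dist v x := hG.dist_triangle
    have e1 : G.dist v' u' = G.dist u' v' := dist_comm
    have e2 : G.dist v' v = G.dist v v' := dist_comm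
    omega
  refine ⟨u', v', ⟨hne, hv'max, hu'max'⟩, Or.inr hu', Or.inl ?_⟩
  have h1 : G.dist u' v' ≤ G.dist u' u + G.dist u v' := hG.dist_triangle
  have h2 : G.dist u v' ≤ G.dist u v + G.dist v v' := hG.dist_triangle
  have e1 : G.dist u' u = G.dist u u' := dist_comm
  have e2 : G.dist u v = G.dist v u := dist_comm
  omega

lemma stronglyResolves_eq_or_eq_of_mutuallyMaxDistant (hG : G.Connected) {u v w : V}
    (huv : mutuallyMaxDistant G u v) (hw : stronglyResolves G w u v) : w = u ∨ w = v := by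
  rcases hw with h | h
  · exact Or.inr (IsMaxDistant.eq_of_dist_eq_add hG huv.1 h)
  · exact Or.inl (IsMaxDistant.eq_of_dist_eq_add hG huv.2 h)

lemma Connected.isStrongResolvingSet_iff [Finite V] (hG : G.Connected) {W : Set V} :
    isStrongResolvingSet G W ↔ ∀ u v, (strongResolvingGraph G).Adj u v → u ∈ W ∨ v ∈ W := by
  constructor
  · rintro hW u v ⟨huv, hmmd⟩
    obtain ⟨w, hwW, hw⟩ := hW u v huv
    rcases stronglyResolves_eq_or_eq_of_mutuallyMaxDistant hG hmmd hw with rfl | rfl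
    exacts [Or.inl hwW, Or.inr hwW]
  · intro hW u v huv
    obtain ⟨u', v', hadj, hu', hv'⟩ := hG.exists_adj_strongResolvingGraph_stronglyResolves huv
    rcases hW u' v' hadj with h | h
    exacts [⟨u', h, hu'⟩, ⟨v', h, hv'⟩]

end SimpleGraph

/-- For a connected graph `G`, `β_s(G) = α(G_SR)`. -/
theorem strongDim_eq_coverNumber_strongResolvingGraph {V : Type*} [Fintype V]
    (G : SimpleGraph V) (hG : G.Connected) :
    strongDim V G = coverNumber V (strongResolvingGraph G) := by
  simp only [strongDim, coverNumber, hG.isStrongResolvingSet_iff, Finset.mem_coe]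
end

section
/- Let G be a connected graph of diameter D, let W = {w_1,...,w_k} ⊆ V(G), and let φ be a W-resolved embedding of G in the strong product of k copies of P_{D+1}. Then for every vertex x of G and every index i, the distance from φ(x) to φ(w_i) in the induced subgraph φ(G) equals the distance from φ(x) to φ(w_i) in the strong product P_{D+1}^{⊠,k}. -/
open SimpleGraph

/-!
Since `φ` is a graph homomorphism from `φ(G)` into the strong product, ambient distances are at
most distances in `φ(G)`. Conversely, `d_{φ(G)}(φ x, φ w_i)` is the `i`-th coordinate of `φ x`,
the `i`-th coordinate of `φ w_i` is `0`, and a step in the strong product changes each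
coordinate by at most one.
-/

theorem SimpleGraph.Reachable.dist_map_le {α β : Type*} {G : SimpleGraph α}
    {G' : SimpleGraph β} (f : G →g G') {u v : α} (h : G.Reachable u v) :
    G'.dist (f u) (f v) ≤ G.dist u v := by
  obtain ⟨p, hp⟩ := h.exists_walk_length_eq_dist
  simpa only [Walk.length_map, hp] using dist_le (p.map f)

namespace strongPow

variable {n k : ℕ} {a b : Fin k → Fin n}

theorem natAbs_sub_le_length (p : (strongPow n k).Walk a b) (i : Fin k) :
    ((a i : ℤ) - (b i : ℤ)).natAbs ≤ p.length := by
  induction p with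
  | nil => simp
  | cons h p ih =>
    have := h.2 i
    simp only [Walk.length_cons]
    omega

theorem natAbs_sub_le_dist (h : (strongPow n k).Reachable a b) (i : Fin k) :
    ((a i : ℤ) - (b i : ℤ)).natAbs ≤ (strongPow n k).dist a b := by
  obtain ⟨p, hp⟩ := h.exists_walk_length_eq_dist
  exact hp ▸ natAbs_sub_le_length p i

end strongPow

theorem IsWResolvedEmbedding.apply_self {V : Type*} {G : SimpleGraph V} {D k : ℕ}
    {w : Fin k → V} {φ : V → Fin k → Fin (D + 1)} (hφ : IsWResolvedEmbedding G D k w φ)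
    (i : Fin k) : (φ (w i) i : ℕ) = 0 := by
  rw [hφ.2.2 (w i) i, dist_self]

theorem WResolved_dist_eq_general {V : Type*} (G : SimpleGraph V) (hG : G.Connected)
    (D k : ℕ) (w : Fin k → V)
    (φ : V → (Fin k → Fin (D + 1))) (hφ : IsWResolvedEmbedding G D k w φ) :
    ∀ (x : V) (i : Fin k),
      (SimpleGraph.comap φ (strongPow (D + 1) k)).dist x (w i)
        = (strongPow (D + 1) k).dist (φ x) (φ (w i)) := by
  intro x i
  let f : SimpleGraph.comap φ (strongPow (D + 1) k) →g strongPow (D + 1) k := ⟨φ, id⟩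
  have hreach : (SimpleGraph.comap φ (strongPow (D + 1) k)).Reachable x (w i) :=
    hG.mono (fun {u v} ↦ hφ.2.1 u v) x (w i)
  refine le_antisymm ?_ (hreach.dist_map_le f)
  have hcoord : ((φ x i : ℤ) - (φ (w i) i : ℤ)).natAbs
      ≤ (strongPow (D + 1) k).dist (φ x) (φ (w i)) :=
    strongPow.natAbs_sub_le_dist (hreach.map f) i
  have hres := hφ.2.2 x i
  have hzero := hφ.apply_self i
  omega

/-- In a `W`-resolved embedding of `G` in `P_{D+1}^{⊠,k}`, the distance from `φ(x)` to
`φ(w_i)` in `φ(G)` equals the distance in the ambient strong product. -/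
theorem WResolved_dist_eq {V : Type*} (G : SimpleGraph V) (hG : G.Connected)
    (D k : ℕ) (hD : G.diam = D) (w : Fin k → V) (hw : Function.Injective w)
    (φ : V → (Fin k → Fin (D + 1))) (hφ : IsWResolvedEmbedding G D k w φ) :
    ∀ (x : V) (i : Fin k),
      (SimpleGraph.comap φ (strongPow (D + 1) k)).dist x (w i)
        = (strongPow (D + 1) k).dist (φ x) (φ (w i)) :=
  WResolved_dist_eq_general G hG D k w φ hφ
end

section
/- Let G be a connected graph of diameter D and W = {w_1,...,w_k} ⊆ V(G). Then W is a strong resolving set for some graph H having G as a spanning subgraph if and only if there is a W-resolved embedding φ of G in the strong product of k copies of P_{D+1} such that φ(G) is an isometric subgraph of P_{D+1}^{⊠,k}. -/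
open SimpleGraph

/-!
Strong resolution of `u, v` by `w` in a graph `H` says exactly that
`|d(u,w) - d(v,w)| = d(u,v)`, while the triangle inequality gives `≤` for every `w`. Distances
in `P_{D+1}^{⊠,k}` are Chebyshev distances, so `W` strongly resolves `H ≥ G` exactly when
`x ↦ (d_H(x, w_i))_i` is an isometric embedding of `H` into `P_{D+1}^{⊠,k}`; its coordinates
are at most `D` because `H` has no larger distances than `G`. Conversely, a `W`-resolved
isometric embedding `φ` makes `W` strongly resolving for the graph induced on `φ(G)`.
-/

namespace SimpleGraph

variable {V X : Type*}

lemma Reachable.dist_map_le_s3 {G : SimpleGraph V} {Y : SimpleGraph X} (f : G →g Y) {u v : V}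
    (hr : G.Reachable u v) : Y.dist (f u) (f v) ≤ G.dist u v := by
  obtain ⟨p, hp⟩ := hr.exists_walk_length_eq_dist
  rw [← hp, ← Walk.length_map f]
  exact dist_le _

lemma le_comap_of_dist_eq {H : SimpleGraph V} {Y : SimpleGraph X} {φ : V → X}
    (hφ : ∀ u v, Y.dist (φ u) (φ v) = H.dist u v) : H ≤ Y.comap φ := fun u v huv => by
  rw [comap_adj, ← dist_eq_one_iff_adj, hφ, dist_eq_one_iff_adj]
  exact huv

lemma Connected.dist_comap_eq_of_dist_eq {H : SimpleGraph V} {Y : SimpleGraph X} {φ : V → X}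
    (hH : H.Connected) (hφ : ∀ u v, Y.dist (φ u) (φ v) = H.dist u v) (u v : V) :
    (Y.comap φ).dist u v = H.dist u v := by
  have hle := le_comap_of_dist_eq hφ
  refine le_antisymm ((hH u v).dist_anti hle) ?_
  rw [← hφ]
  exact ((hH u v).mono hle).dist_map_le_s3 (Hom.comap φ Y)

lemma Connected.injective_of_dist_eq {H : SimpleGraph V} {Y : SimpleGraph X} {φ : V → X}
    (hH : H.Connected) (hφ : ∀ u v, Y.dist (φ u) (φ v) = H.dist u v) : φ.Injective :=
  fun u v huv => hH.dist_eq_zero_iff.mp (by rw [← hφ, huv, dist_self])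

lemma stronglyResolves_iff_natAbs_sub_eq {G : SimpleGraph V} {w u v : V} :
    stronglyResolves G w u v ↔ ((G.dist u w : ℤ) - G.dist v w).natAbs = G.dist u v := by
  rw [stronglyResolves, dist_comm (u := v) (v := u)]
  omega

lemma Connected.natAbs_dist_sub_dist_le {G : SimpleGraph V} (hG : G.Connected) (u v w : V) :
    ((G.dist u w : ℤ) - G.dist v w).natAbs ≤ G.dist u v := by
  have huv := hG.dist_triangle (u := u) (v := v) (w := w)
  have hvu := hG.dist_triangle (u := v) (v := u) (w := w)
  rw [dist_comm (u := v) (v := u)] at hvu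
  omega

lemma Connected.sup_natAbs_dist_sub_dist_eq {G : SimpleGraph V} (hG : G.Connected) {k : ℕ}
    {w : Fin k → V} (hw : ∀ u v, u ≠ v → ∃ i, stronglyResolves G (w i) u v) (u v : V) :
    Finset.univ.sup (fun i => ((G.dist u (w i) : ℤ) - G.dist v (w i)).natAbs) = G.dist u v := by
  refine le_antisymm (Finset.sup_le fun i _ => hG.natAbs_dist_sub_dist_le u v (w i)) ?_
  rcases eq_or_ne u v with rfl | huv
  · simp
  obtain ⟨i, hi⟩ := hw u v huv
  exact (stronglyResolves_iff_natAbs_sub_eq.mp hi).symm.le.trans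
    (Finset.le_sup (f := fun i => ((G.dist u (w i) : ℤ) - G.dist v (w i)).natAbs)
      (Finset.mem_univ i))

end SimpleGraph

section strongPow

variable {n k : ℕ}

lemma Fin.exists_step_toward (a b : Fin n) :
    ∃ c : Fin n, ((a : ℤ) - c).natAbs ≤ 1 ∧ ((c : ℤ) - b).natAbs = ((a : ℤ) - b).natAbs - 1 := by
  rcases lt_trichotomy (a : ℕ) b with h | h | h
  · exact ⟨⟨a + 1, by omega⟩, by simp only; omega⟩
  · exact ⟨a, by simp only [h]; omega⟩
  · exact ⟨⟨a - 1, by omega⟩, by simp only; omega⟩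

lemma strongPow_natAbs_sub_le_length {x y : Fin k → Fin n} (p : (strongPow n k).Walk x y)
    (i : Fin k) : ((x i : ℤ) - y i).natAbs ≤ p.length := by
  induction p with
  | nil => simp
  | cons h _ ih =>
    have := h.2 i
    rw [Walk.length_cons]
    omega

lemma strongPow_exists_walk_length_le (M : ℕ) {x y : Fin k → Fin n}
    (h : ∀ i, ((x i : ℤ) - y i).natAbs ≤ M) : ∃ p : (strongPow n k).Walk x y, p.length ≤ M := by
  induction M generalizing x with
  | zero =>
    obtain rfl : x = y := funext fun i => Fin.ext (by have := h i; omega)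
    exact ⟨.nil, le_rfl⟩
  | succ M ih =>
    choose z hxz hzy using fun i => Fin.exists_step_toward (x i) (y i)
    obtain ⟨p, hp⟩ := ih (x := z) fun i => by have := h i; have := hzy i; omega
    by_cases hx : x = z
    · subst hx
      exact ⟨p, hp.trans M.le_succ⟩
    · refine ⟨.cons (show (strongPow n k).Adj x z from ⟨hx, hxz⟩) p, ?_⟩
      rw [Walk.length_cons]
      omega

lemma strongPow_dist (x y : Fin k → Fin n) :
    (strongPow n k).dist x y = Finset.univ.sup (fun i => ((x i : ℤ) - y i).natAbs) := by
  obtain ⟨p, hp⟩ := strongPow_exists_walk_length_le _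
    fun i => Finset.le_sup (f := fun i => ((x i : ℤ) - y i).natAbs) (Finset.mem_univ i)
  refine le_antisymm ((dist_le p).trans hp) (Finset.sup_le fun i _ => ?_)
  obtain ⟨q, hq⟩ := p.reachable.exists_walk_length_eq_dist
  exact hq ▸ strongPow_natAbs_sub_le_length q i

end strongPow

section embedding

variable {V : Type*} {G : SimpleGraph V} {D k : ℕ} {w : Fin k → V}

lemma exists_isometric_WResolvedEmbedding [Finite V] (hG : G.Connected) (hD : G.diam = D)
    {H : SimpleGraph V} (hGH : G ≤ H) (hw : ∀ u v, u ≠ v → ∃ i, stronglyResolves H (w i) u v) :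
    ∃ φ : V → (Fin k → Fin (D + 1)), IsWResolvedEmbedding G D k w φ ∧ IsIsometricImage D k φ := by
  have hH : H.Connected := hG.mono hGH
  have hdist_le : ∀ x y, H.dist x y ≤ D := fun x y => calc
    H.dist x y ≤ G.dist x y := (hG x y).dist_anti hGH
    _ ≤ D := by
      have := hG.nonempty
      exact hD ▸ dist_le_diam (connected_iff_ediam_ne_top.mp hG)
  let φ : V → Fin k → Fin (D + 1) := fun x i => ⟨H.dist x (w i), Nat.lt_succ_of_le (hdist_le _ _)⟩
  have hφ : ∀ u v, (strongPow (D + 1) k).dist (φ u) (φ v) = H.dist u v := fun u v => by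
    rw [strongPow_dist]
    exact hH.sup_natAbs_dist_sub_dist_eq hw u v
  refine ⟨φ, ⟨hH.injective_of_dist_eq hφ, fun u v huv => le_comap_of_dist_eq hφ (hGH huv),
    fun x i => (hH.dist_comap_eq_of_dist_eq hφ x (w i)).symm⟩, fun u v => ?_⟩
  rw [hH.dist_comap_eq_of_dist_eq hφ, hφ]

lemma IsWResolvedEmbedding.stronglyResolves_comap {φ : V → (Fin k → Fin (D + 1))}
    (hφ : IsWResolvedEmbedding G D k w φ) (hiso : IsIsometricImage D k φ) {u v : V}
    (huv : u ≠ v) : ∃ i, stronglyResolves ((strongPow (D + 1) k).comap φ) (w i) u v := by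
  obtain ⟨hinj, -, hcoord⟩ := hφ
  have : Nonempty (Fin k) :=
    let ⟨i, _⟩ := Function.ne_iff.mp (hinj.ne huv)
    ⟨i⟩
  obtain ⟨i, -, hi⟩ := Finset.exists_mem_eq_sup Finset.univ Finset.univ_nonempty
    fun i => ((φ u i : ℤ) - φ v i).natAbs
  refine ⟨i, stronglyResolves_iff_natAbs_sub_eq.mpr ?_⟩
  rw [← hcoord, ← hcoord, hiso, strongPow_dist, hi]

end embedding

theorem strongResolving_iff_isometric_WResolvedEmbedding_general {V : Type*} [Fintype V]
    (G : SimpleGraph V) (hG : G.Connected) (D k : ℕ) (hD : G.diam = D)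
    (w : Fin k → V) :
    (∃ H : SimpleGraph V, G ≤ H ∧
        ∀ u v : V, u ≠ v → ∃ i : Fin k, stronglyResolves H (w i) u v) ↔
    (∃ φ : V → (Fin k → Fin (D + 1)),
        IsWResolvedEmbedding G D k w φ ∧ IsIsometricImage D k φ) := by
  constructor
  · rintro ⟨H, hGH, hw⟩
    exact exists_isometric_WResolvedEmbedding hG hD hGH hw
  · rintro ⟨φ, hφ, hiso⟩
    exact ⟨_, hφ.2.1, fun u v huv => hφ.stronglyResolves_comap hiso huv⟩

/-- `W = {w_1,…,w_k}` is a strong resolving set for some graph `H` having `G` as a spanning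
subgraph iff there is a `W`-resolved embedding of `G` in `P_{D+1}^{⊠,k}` whose image is an
isometric subgraph of `P_{D+1}^{⊠,k}`. -/
theorem strongResolving_iff_isometric_WResolvedEmbedding {V : Type*} [Fintype V]
    (G : SimpleGraph V) (hG : G.Connected) (D k : ℕ) (hD : G.diam = D)
    (w : Fin k → V) (hw : Function.Injective w) :
    (∃ H : SimpleGraph V, G ≤ H ∧
        ∀ u v : V, u ≠ v → ∃ i : Fin k, stronglyResolves H (w i) u v) ↔
    (∃ φ : V → (Fin k → Fin (D + 1)),
        IsWResolvedEmbedding G D k w φ ∧ IsIsometricImage D k φ) :=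
  strongResolving_iff_isometric_WResolvedEmbedding_general G hG D k hD w
end

section
/- If G is a connected graph with metric dimension 2 and metric basis W = {w_1, w_2}, then each of w_1 and w_2 has degree at most 3 in G. -/
open SimpleGraph

/-!
All neighbours of `w₁` are at distance 1 from `w₁`, so the basis can only tell them apart by
their distances to `w₂`; these lie within 1 of `d(w₁, w₂)`, leaving at most three values.
-/

section

variable {V : Type*} {G : SimpleGraph V} {a b u : V}

lemma isResolvingSet.injOn_dist_neighborSet (h : isResolvingSet G {a, b}) :
    Set.InjOn (G.dist · b) (G.neighborSet a) := by
  intro u hu v hv huv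
  by_contra hne
  obtain ⟨w, hw, hdist⟩ := h u v hne
  rcases hw with rfl | rfl
  · rw [dist_eq_one_iff_adj.2 (G.adj_symm hu), dist_eq_one_iff_adj.2 (G.adj_symm hv)] at hdist
    exact hdist rfl
  · exact hdist huv

lemma Adj.dist_mem_Icc (h : G.Adj a u) :
    G.dist u b ∈ Set.Icc (G.dist a b - 1) (G.dist a b + 1) := by
  rw [G.dist_comm, G.dist_comm (v := b), Set.mem_Icc]
  rcases h.diff_dist_adj (u := b) with h | h | h <;> omega

lemma isResolvingSet.ncard_neighborSet_le_three (h : isResolvingSet G {a, b}) :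
    (G.neighborSet a).ncard ≤ 3 :=
  calc (G.neighborSet a).ncard
      ≤ (Set.Icc (G.dist a b - 1) (G.dist a b + 1)).ncard :=
        Set.ncard_le_ncard_of_injOn _ (fun _ hu => Adj.dist_mem_Icc hu)
          h.injOn_dist_neighborSet (Set.finite_Icc _ _)
    _ ≤ 3 := by rw [Set.ncard_Icc_nat]; omega

end

theorem metricBasis_degree_le_three_general {V : Type*}
    (G : SimpleGraph V) (w₁ w₂ : V)
    (hbasis : isResolvingSet G {w₁, w₂}) :
    (G.neighborSet w₁).ncard ≤ 3 ∧ (G.neighborSet w₂).ncard ≤ 3 :=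
  ⟨hbasis.ncard_neighborSet_le_three,
    isResolvingSet.ncard_neighborSet_le_three (Set.pair_comm w₁ w₂ ▸ hbasis)⟩

/-- In a connected graph of metric dimension 2 with metric basis `{w₁, w₂}`,
both basis vertices have degree at most 3. -/
theorem metricBasis_degree_le_three {V : Type*} [Fintype V]
    (G : SimpleGraph V) (hG : G.Connected) (w₁ w₂ : V) (hne : w₁ ≠ w₂)
    (hdim : metricDim V G = 2) (hbasis : isResolvingSet G {w₁, w₂}) :
    (G.neighborSet w₁).ncard ≤ 3 ∧ (G.neighborSet w₂).ncard ≤ 3 :=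
  metricBasis_degree_le_three_general G w₁ w₂ hbasis
end

section
/- If G is a connected graph with metric dimension 2 and metric basis W = {w_1, w_2}, then there is a unique shortest w_1–w_2 path in G, and every vertex on that path has degree at most 5. -/
open SimpleGraph

/-!
A resolving pair `{w₁, w₂}` makes the coordinate map `x ↦ (d(x, w₁), d(x, w₂))` injective.
On a shortest `w₁`–`w₂` path of length `d` the `i`-th vertex has coordinates `(i, d - i)`, so two
such paths agree vertex by vertex. A neighbour of a vertex with coordinates `(i, j)`, `i + j = d`,
has each coordinate within `1` of it, coordinate sum at least `d` by the triangle inequality, and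
different coordinates: that leaves five points, and injectivity bounds the degree by five.
-/

namespace SimpleGraph

variable {V : Type*} {G : SimpleGraph V}

lemma isResolvingSet_pair_iff_injective {w₁ w₂ : V} :
    isResolvingSet G {w₁, w₂} ↔ Function.Injective fun x ↦ (G.dist x w₁, G.dist x w₂) := by
  refine ⟨fun h x y hxy ↦ ?_, fun h x y hxy ↦ ?_⟩
  · by_contra hne
    obtain ⟨w, hw, hdist⟩ := h x y hne
    rcases hw with rfl | rfl
    · exact hdist (congrArg Prod.fst hxy)
    · exact hdist (congrArg Prod.snd hxy)
  · by_contra! hsame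
    exact hxy (h (Prod.ext (hsame w₁ (by simp)) (hsame w₂ (by simp))))

namespace Walk

variable {u v w : V} {p : G.Walk u v}

lemma dist_getVert_of_length_eq_dist (hp : p.length = G.dist u v) (i : ℕ) :
    G.dist u (p.getVert i) = min i p.length := by
  rw [← length_eq_dist_of_subwalk hp (p.isSubwalk_take i), take_length]

lemma dist_getVert_right_of_length_eq_dist (hp : p.length = G.dist u v) (i : ℕ) :
    G.dist (p.getVert i) v = p.length - i := by
  rw [← length_eq_dist_of_subwalk hp (p.isSubwalk_drop i), drop_length]

lemma dist_add_dist_of_mem_support (hp : p.length = G.dist u v) (hw : w ∈ p.support) :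
    G.dist u w + G.dist w v = G.dist u v := by
  classical
  rw [← length_eq_dist_of_subwalk hp (p.isSubwalk_takeUntil hw),
    ← length_eq_dist_of_subwalk hp (p.isSubwalk_dropUntil hw), ← length_append, take_spec, hp]

lemma eq_of_length_eq_dist_of_injective
    (hinj : Function.Injective fun x ↦ (G.dist x u, G.dist x v)) {q : G.Walk u v}
    (hp : p.length = G.dist u v) (hq : q.length = G.dist u v) : p = q := by
  have coordinates (r : G.Walk u v) (hr : r.length = G.dist u v) (i : ℕ) :
      (G.dist (r.getVert i) u, G.dist (r.getVert i) v) = (min i (G.dist u v), G.dist u v - i) := by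
    rw [dist_comm, dist_getVert_of_length_eq_dist hr, dist_getVert_right_of_length_eq_dist hr, hr]
  exact ext_getVert_le_length (hp.trans hq.symm) fun i _ ↦
    hinj ((coordinates p hp i).trans (coordinates q hq i).symm)

end Walk

/-- The possible coordinates of a neighbour of a vertex with coordinates `(i, j)` on a shortest
path; at `i = 0` or `j = 0` the truncated subtractions merely produce duplicates. -/
def geodesicNeighborCoords (i j : ℕ) : Finset (ℕ × ℕ) :=
  {(i - 1, j + 1), (i, j + 1), (i + 1, j - 1), (i + 1, j), (i + 1, j + 1)}

lemma dist_mem_of_adj_of_dist_add_dist {u w v x : V} (hr : G.Reachable u v)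
    (hv : G.dist u v + G.dist v w = G.dist u w) (hadj : G.Adj v x)
    (hne : (G.dist x u, G.dist x w) ≠ (G.dist v u, G.dist v w)) :
    (G.dist x u, G.dist x w) ∈ geodesicNeighborCoords (G.dist v u) (G.dist v w) := by
  have hu := hadj.diff_dist_adj (u := u)
  have hw := hadj.diff_dist_adj (u := w)
  have htri : G.dist u w ≤ G.dist u x + G.dist x w :=
    (hr.trans hadj.reachable).dist_triangle_left w
  rw [dist_comm (u := w), dist_comm (u := w)] at hw
  rw [dist_comm (u := u) (v := x), dist_comm (u := u) (v := v)] at hu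
  rw [dist_comm (u := u) (v := x)] at htri
  rw [dist_comm (u := u) (v := v)] at hv
  simp only [geodesicNeighborCoords, Finset.mem_insert, Finset.mem_singleton, Prod.mk.injEq, ne_eq] at hne ⊢
  omega

theorem ncard_neighborSet_le_five_of_dist_add_dist {u w v : V}
    (hinj : Function.Injective fun x ↦ (G.dist x u, G.dist x w)) (hr : G.Reachable u v)
    (hv : G.dist u v + G.dist v w = G.dist u w) : (G.neighborSet v).ncard ≤ 5 := by
  calc (G.neighborSet v).ncard
      ≤ (geodesicNeighborCoords (G.dist v u) (G.dist v w) : Set (ℕ × ℕ)).ncard :=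
        Set.ncard_le_ncard_of_injOn _
          (fun x hx ↦ dist_mem_of_adj_of_dist_add_dist hr hv hx
            fun h ↦ G.loopless.irrefl v (hinj h ▸ hx))
          hinj.injOn (Finset.finite_toSet _)
    _ ≤ 5 := by rw [Set.ncard_coe_finset]; exact Finset.card_le_five

end SimpleGraph

theorem metricBasis_unique_geodesic_degree_le_five_general {V : Type*}
    (G : SimpleGraph V) (hG : G.Connected) (w₁ w₂ : V)
    (hbasis : isResolvingSet G {w₁, w₂}) :
    (∃! p : G.Walk w₁ w₂, p.IsPath ∧ p.length = G.dist w₁ w₂) ∧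
    ∀ p : G.Walk w₁ w₂, p.IsPath → p.length = G.dist w₁ w₂ →
      ∀ v ∈ p.support, (G.neighborSet v).ncard ≤ 5 := by
  have hinj := isResolvingSet_pair_iff_injective.mp hbasis
  obtain ⟨p, hp⟩ := hG.exists_path_of_dist w₁ w₂
  refine ⟨⟨p, hp, fun q hq ↦ Walk.eq_of_length_eq_dist_of_injective hinj hq.2 hp.2⟩, ?_⟩
  intro q _ hq v hv
  exact ncard_neighborSet_le_five_of_dist_add_dist hinj (hG.preconnected w₁ v)
    (Walk.dist_add_dist_of_mem_support hq hv)

/-- In a connected graph of metric dimension 2 with metric basis `{w₁, w₂}`, there is a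
unique shortest `w₁`–`w₂` path, and every vertex on it has degree at most 5. -/
theorem metricBasis_unique_geodesic_degree_le_five {V : Type*} [Fintype V]
    (G : SimpleGraph V) (hG : G.Connected) (w₁ w₂ : V) (hne : w₁ ≠ w₂)
    (hdim : metricDim V G = 2) (hbasis : isResolvingSet G {w₁, w₂}) :
    (∃! p : G.Walk w₁ w₂, p.IsPath ∧ p.length = G.dist w₁ w₂) ∧
    ∀ p : G.Walk w₁ w₂, p.IsPath → p.length = G.dist w₁ w₂ →
      ∀ v ∈ p.support, (G.neighborSet v).ncard ≤ 5 :=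
  metricBasis_unique_geodesic_degree_le_five_general G hG w₁ w₂ hbasis
end

section
/- If G is a connected graph with metric dimension 2 and metric basis {w_1, w_2}, then for j = 1,2 and for every 0 ≤ i ≤ e(w_j), the subgraph of G induced by the set N_i(w_j) of vertices at distance exactly i from w_j is a disjoint union of paths, and |N_i(w_j)| ≤ 2i + 1. -/
open SimpleGraph

/-! If `{w, u}` resolves `G`, then vertices at the same distance `i` from `w` are told apart by
their distance to `u`, so `x ↦ d(u, x)` is injective on `N_i(w)`. The distances to `u` of adjacent
vertices differ by at most one, hence here by exactly one: this map is an injective homomorphism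
from the subgraph induced by `N_i(w)` into the path `hasse ℕ`, which has maximum degree two and is
acyclic. By the triangle inequality its values lie in `[d(u, w) - i, d(u, w) + i]`, whence
`|N_i(w)| ≤ 2i + 1`. -/

namespace SimpleGraph

lemma hasse_nat_adj {m n : ℕ} : (hasse ℕ).Adj m n ↔ n = m + 1 ∨ m = n + 1 := by
  simp only [hasse_adj, Nat.covBy_iff_add_one_eq]
  omega

lemma neighborSet_hasse_nat_subset (n : ℕ) : (hasse ℕ).neighborSet n ⊆ {n + 1, n - 1} := by
  intro m hm
  have := hasse_nat_adj.mp hm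
  simp only [Set.mem_insert_iff, Set.mem_singleton_iff]
  omega

lemma Walk.mem_edges_of_le_of_lt {x y : ℕ} (a : ℕ) (p : (hasse ℕ).Walk x y)
    (hx : x ≤ a) (hy : a < y) : s(a, a + 1) ∈ p.edges := by
  induction p with
  | nil => omega
  | @cons x z y hxz q ih =>
    rw [Walk.edges_cons, List.mem_cons]
    by_cases hz : z ≤ a
    · exact Or.inr (ih hz hy)
    · obtain ⟨rfl, rfl⟩ : x = a ∧ z = a + 1 := by have := hasse_nat_adj.mp hxz; omega
      exact Or.inl rfl

lemma isAcyclic_hasse_nat : (hasse ℕ).IsAcyclic := by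
  rw [isAcyclic_iff_forall_adj_isBridge]
  intro m n hmn
  rcases hasse_nat_adj.mp hmn with rfl | rfl
  · exact isBridge_iff_forall_walk_mem_edges.mpr
      fun p => p.mem_edges_of_le_of_lt m le_rfl m.lt_succ_self
  · refine isBridge_iff_forall_walk_mem_edges.mpr fun p => ?_
    rw [Sym2.eq_swap, ← List.mem_reverse, ← Walk.edges_reverse]
    exact p.reverse.mem_edges_of_le_of_lt n le_rfl n.lt_succ_self

variable {V : Type*} {G : SimpleGraph V} {u : V} {S : Set V}

noncomputable def induceHomHasseOfInjOnDist (hS : S.InjOn (G.dist u)) :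
    G.induce S →g hasse ℕ where
  toFun x := G.dist u x
  map_rel' {x y} hxy := by
    have hne : G.dist u x ≠ G.dist u y := fun h => hxy.ne (Subtype.ext (hS x.2 y.2 h))
    have := (show G.Adj x y from hxy).diff_dist_adj (u := u)
    rw [hasse_nat_adj]
    omega

lemma induceHomHasseOfInjOnDist_injective (hS : S.InjOn (G.dist u)) :
    Function.Injective (induceHomHasseOfInjOnDist hS) :=
  fun x y h => Subtype.ext (hS x.2 y.2 h)

lemma ncard_neighborSet_induce_le_two (hS : S.InjOn (G.dist u)) (v : S) :
    ((G.induce S).neighborSet v).ncard ≤ 2 := by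
  set f := induceHomHasseOfInjOnDist hS
  calc ((G.induce S).neighborSet v).ncard
      ≤ ({f v + 1, f v - 1} : Set ℕ).ncard :=
        Set.ncard_le_ncard_of_injOn f
          (fun _ hx => neighborSet_hasse_nat_subset _ (f.apply_mem_neighborSet hx))
          (induceHomHasseOfInjOnDist_injective hS).injOn (Set.toFinite _)
    _ ≤ ({f v - 1} : Set ℕ).ncard + 1 := Set.ncard_insert_le _ _
    _ = 2 := by rw [Set.ncard_singleton]

lemma isAcyclic_induce_of_injOn_dist (hS : S.InjOn (G.dist u)) : (G.induce S).IsAcyclic :=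
  isAcyclic_hasse_nat.comap _ (induceHomHasseOfInjOnDist_injective hS)

lemma ncard_setOf_dist_eq_le (hG : G.Connected) {w : V} {i : ℕ}
    (hinj : Set.InjOn (G.dist u) {x | G.dist w x = i}) :
    {x | G.dist w x = i}.ncard ≤ 2 * i + 1 :=
  calc {x | G.dist w x = i}.ncard
      ≤ (Set.Icc (G.dist u w - i) (G.dist u w + i)).ncard := by
        refine Set.ncard_le_ncard_of_injOn _ (fun x (hx : G.dist w x = i) => ?_) hinj
          (Set.finite_Icc _ _)
        have h₁ : G.dist u x ≤ G.dist u w + G.dist w x := hG.dist_triangle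
        have h₂ : G.dist u w ≤ G.dist u x + G.dist x w := hG.dist_triangle
        have h₃ : G.dist x w = G.dist w x := dist_comm
        rw [Set.mem_Icc]
        omega
    _ ≤ 2 * i + 1 := by rw [Set.ncard_Icc_nat]; omega

end SimpleGraph

lemma isResolvingSet.injOn_dist {V : Type*} {G : SimpleGraph V} {w u : V}
    (h : isResolvingSet G {w, u}) (i : ℕ) : Set.InjOn (G.dist u) {x | G.dist w x = i} := by
  intro x (hx : G.dist w x = i) y (hy : G.dist w y = i) hxy
  by_contra hne
  obtain ⟨z, hz, hd⟩ := h x y hne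
  rcases hz with rfl | rfl
  · rw [dist_comm, hx, dist_comm, hy] at hd
    exact hd rfl
  · rw [dist_comm, hxy, dist_comm] at hd
    exact hd rfl

theorem metricBasis_level_sets_union_of_paths_general {V : Type*}
    (G : SimpleGraph V) (hG : G.Connected) (w₁ w₂ : V)
    (hbasis : isResolvingSet G {w₁, w₂}) :
    ∀ w : V, (w = w₁ ∨ w = w₂) → ∀ i : ℕ,
      (∀ v : {v : V // v ∈ {x | G.dist w x = i}},
        ((G.induce {x | G.dist w x = i}).neighborSet v).ncard ≤ 2) ∧
      (G.induce {x | G.dist w x = i}).IsAcyclic ∧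
      {x | G.dist w x = i}.ncard ≤ 2 * i + 1 := by
  intro w hw i
  obtain ⟨u, hwu⟩ : ∃ u, isResolvingSet G {w, u} := by
    rcases hw with rfl | rfl
    exacts [⟨w₂, hbasis⟩, ⟨w₁, Set.pair_comm w₁ w ▸ hbasis⟩]
  have hinj := hwu.injOn_dist i
  exact ⟨ncard_neighborSet_induce_le_two hinj, isAcyclic_induce_of_injOn_dist hinj,
    ncard_setOf_dist_eq_le hG hinj⟩

/-- In a connected graph of metric dimension 2 with metric basis `{w₁, w₂}`, each distance
level `N_i(w_j)` induces a disjoint union of paths (max degree ≤ 2 and acyclic) and has at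
most `2i + 1` vertices. -/
theorem metricBasis_level_sets_union_of_paths {V : Type*} [Fintype V]
    (G : SimpleGraph V) (hG : G.Connected) (w₁ w₂ : V) (hne : w₁ ≠ w₂)
    (hdim : metricDim V G = 2) (hbasis : isResolvingSet G {w₁, w₂}) :
    ∀ w : V, (w = w₁ ∨ w = w₂) → ∀ i : ℕ,
      (∀ v : {v : V // v ∈ {x | G.dist w x = i}},
        ((G.induce {x | G.dist w x = i}).neighborSet v).ncard ≤ 2) ∧
      (G.induce {x | G.dist w x = i}).IsAcyclic ∧
      {x | G.dist w x = i}.ncard ≤ 2 * i + 1 :=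
  metricBasis_level_sets_union_of_paths_general G hG w₁ w₂ hbasis
end

section
/- If G is a connected graph with metric dimension 2 and metric basis {w_1, w_2}, then every vertex v at distance i from w_j (j = 1 or 2) is adjacent to at most three vertices at distance i+1 from w_j and to at most three vertices at distance i−1 from w_j. -/
open SimpleGraph

/-! Distances to the two vertices of a resolving pair determine a vertex, so the neighbours of
`v` at a fixed distance from `w₁` are told apart by their distances to `w₂`; these differ from
`G.dist w₂ v` by at most one, which leaves only three possible values. -/

namespace SimpleGraph

variable {V : Type*} {G : SimpleGraph V}

lemma ncard_le_three_of_injOn_dist {v u : V} {S : Set V} (hadj : ∀ x ∈ S, G.Adj v x)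
    (hinj : Set.InjOn (G.dist u) S) : S.ncard ≤ 3 := by
  classical
  let d := G.dist u v
  calc S.ncard ≤ (({d, d + 1, d - 1} : Finset ℕ) : Set ℕ).ncard :=
        Set.ncard_le_ncard_of_injOn _ (fun x hx => by simpa using (hadj x hx).diff_dist_adj) hinj
    _ ≤ 3 := by rw [Set.ncard_coe_finset]; exact Finset.card_le_three

lemma injOn_dist_of_isResolvingSet_pair {w w' : V} (h : isResolvingSet G {w, w'}) (j : ℕ) :
    Set.InjOn (G.dist w') {x | G.dist w x = j} := by
  intro x hx y hy hxy
  by_contra hne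
  obtain ⟨u, hu, hdist⟩ := h x y hne
  rcases hu with rfl | rfl
  · exact hdist (by rw [dist_comm, hx, dist_comm, hy])
  · exact hdist (by rwa [dist_comm, dist_comm (u := y)])

lemma ncard_adj_dist_eq_le_three_of_isResolvingSet_pair {w w' : V}
    (h : isResolvingSet G {w, w'}) (v : V) (j : ℕ) :
    {x | G.Adj v x ∧ G.dist w x = j}.ncard ≤ 3 :=
  ncard_le_three_of_injOn_dist (fun _ hx => hx.1)
    ((injOn_dist_of_isResolvingSet_pair h j).mono fun _ hx => hx.2)

end SimpleGraph

theorem metricBasis_neighbours_between_levels_general {V : Type*}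
    (G : SimpleGraph V) (w₁ w₂ : V)
    (hbasis : isResolvingSet G {w₁, w₂}) :
    ∀ w : V, (w = w₁ ∨ w = w₂) → ∀ (v : V) (i : ℕ), G.dist w v = i →
      {x | G.Adj v x ∧ G.dist w x = i + 1}.ncard ≤ 3 ∧
      (1 ≤ i → {x | G.Adj v x ∧ G.dist w x = i - 1}.ncard ≤ 3) := by
  intro w hw v i _
  have hlevel : ∀ j, {x | G.Adj v x ∧ G.dist w x = j}.ncard ≤ 3 := by
    rcases hw with rfl | rfl
    · exact ncard_adj_dist_eq_le_three_of_isResolvingSet_pair hbasis v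
    · rw [Set.pair_comm] at hbasis
      exact ncard_adj_dist_eq_le_three_of_isResolvingSet_pair hbasis v
  exact ⟨hlevel _, fun _ => hlevel _⟩

/-- In a connected graph of metric dimension 2 with metric basis `{w₁, w₂}`, every vertex at
distance `i` from a basis vertex has at most three neighbours at distance `i+1` and at most
three neighbours at distance `i-1` from that basis vertex. -/
theorem metricBasis_neighbours_between_levels {V : Type*} [Fintype V]
    (G : SimpleGraph V) (hG : G.Connected) (w₁ w₂ : V) (hne : w₁ ≠ w₂)
    (hdim : metricDim V G = 2) (hbasis : isResolvingSet G {w₁, w₂}) :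
    ∀ w : V, (w = w₁ ∨ w = w₂) → ∀ (v : V) (i : ℕ), G.dist w v = i →
      {x | G.Adj v x ∧ G.dist w x = i + 1}.ncard ≤ 3 ∧
      (1 ≤ i → {x | G.Adj v x ∧ G.dist w x = i - 1}.ncard ≤ 3) :=
  metricBasis_neighbours_between_levels_general G w₁ w₂ hbasis
end

section
/- Let G be a connected graph whose strong resolving graph G_SR has vertex covering number 2, and let {w_1, w_2} be a vertex cover of G_SR. Then w_1 and w_2 have at most one common neighbour in G_SR. -/
open SimpleGraph

/-!
If `u ≠ v` were two common neighbours of `w₁, w₂` in `G_SR`, extend a geodesic from `u` through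
`v` to a vertex `v'` maximally distant from `u`, and then a geodesic from `v'` through `u` to a
vertex `u'` maximally distant from `v'`; the pair `u', v'` is mutually maximally distant, so one of
them is `w₁` or `w₂`. But `u` lies strictly inside a `v`–`u'` geodesic and `v` strictly inside a
`u`–`v'` geodesic, and a vertex lying strictly inside a geodesic ending at `w` has a neighbour
farther from `w`, so it is not mutually maximally distant from `w`.
-/

namespace SimpleGraph

variable {V : Type*} {G : SimpleGraph V} {u v w x y : V}

/-- `v` is maximally distant from `u`; `mutuallyMaxDistant G u v` unfolds to
`G.maxDistant u v ∧ G.maxDistant v u`. -/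
def maxDistant (G : SimpleGraph V) (u v : V) : Prop :=
  ∀ x, G.Adj v x → G.dist u x ≤ G.dist u v

lemma Adj.dist_le_dist_add_one (h : G.Adj x y) (u : V) : G.dist u y ≤ G.dist u x + 1 := by
  simpa [dist_eq_one_iff_adj.mpr h] using h.reachable.dist_triangle_right u

lemma Reachable.exists_adj_dist_add_one_eq (hr : G.Reachable u v) (huv : u ≠ v) :
    ∃ x, G.Adj u x ∧ G.dist x v + 1 = G.dist u v := by
  obtain ⟨p, hp⟩ := hr.exists_walk_length_eq_dist
  have hnil : ¬ p.Nil := fun h => huv h.eq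
  refine ⟨p.snd, p.adj_snd hnil, le_antisymm ?_ ?_⟩
  · have := G.dist_le p.tail
    have := p.length_tail_add_one hnil
    omega
  · have := (p.adj_snd hnil).symm.dist_le_dist_add_one v
    rwa [dist_comm, dist_comm (u := v)] at this

namespace Connected

lemma not_maxDistant_of_dist_eq_add (hG : G.Connected) {a b : V} (hab : a ≠ b)
    (h : G.dist a w = G.dist a b + G.dist b w) : ¬ G.maxDistant w b := by
  intro hb
  obtain ⟨x, hbx, hx⟩ := (hG b a).exists_adj_dist_add_one_eq hab.symm
  have hxw : G.dist x w ≤ G.dist b w := by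
    rw [dist_comm, dist_comm (u := b)]
    exact hb x hbx
  have := hG.dist_triangle (u := a) (v := x) (w := w)
  rw [dist_comm (u := b), dist_comm (u := x)] at hx
  omega

lemma exists_maxDistant_dist_eq_add [Finite V] (hG : G.Connected) (u v : V) :
    ∃ v', G.maxDistant u v' ∧ G.dist u v' = G.dist u v + G.dist v v' := by
  obtain ⟨y, hyS, hmax⟩ := Set.exists_max_image
    {y | G.dist u y = G.dist u v + G.dist v y} (G.dist u) (Set.toFinite _) ⟨v, by simp⟩
  refine ⟨y, fun x hyx => ?_, hyS⟩
  by_contra! hlt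
  have := hyx.dist_le_dist_add_one u
  have := hyx.dist_le_dist_add_one v
  have := hG.dist_triangle (u := u) (v := v) (w := x)
  have : G.dist u y ≥ G.dist u x := hmax x (by simp only [Set.mem_ofPred_eq] at hyS ⊢; omega)
  omega

lemma exists_strongResolvingGraph_adj_dist_eq_add [Finite V] (hG : G.Connected) (huv : u ≠ v) :
    ∃ u' v', (strongResolvingGraph G).Adj u' v' ∧
      G.dist u v' = G.dist u v + G.dist v v' ∧ G.dist v u' = G.dist v u + G.dist u u' := by
  obtain ⟨v', hv'max, hv'⟩ := hG.exists_maxDistant_dist_eq_add u v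
  obtain ⟨u', hu'max, hu'⟩ := hG.exists_maxDistant_dist_eq_add v' u
  have hpos := hG.pos_dist_of_ne huv
  have hvu' := hG.dist_triangle (u := v) (v := u) (w := u')
  have hv'u' := hG.dist_triangle (u := v') (v := v) (w := u')
  have c₁ : G.dist u' u = G.dist u u' := dist_comm
  have c₂ : G.dist v' u = G.dist u v' := dist_comm
  have c₃ : G.dist v' v = G.dist v v' := dist_comm
  have c₄ : G.dist v u = G.dist u v := dist_comm
  have c₅ : G.dist u' v' = G.dist v' u' := dist_comm
  have hv'max' : G.maxDistant u' v' := fun x hx => by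
    have := hv'max x hx
    have := hG.dist_triangle (u := u') (v := u) (w := x)
    omega
  refine ⟨u', v', ⟨fun h => ?_, hv'max', hu'max⟩, hv', by omega⟩
  subst h
  simp only [dist_self] at hu'
  omega

end Connected

end SimpleGraph

theorem vertexCover_common_neighbours_le_one_general {V : Type*} [Fintype V]
    (G : SimpleGraph V) (hG : G.Connected)
    (w₁ w₂ : V)
    (hc : ∀ u v : V, (strongResolvingGraph G).Adj u v → u = w₁ ∨ u = w₂ ∨ v = w₁ ∨ v = w₂) :
    {v | (strongResolvingGraph G).Adj w₁ v ∧ (strongResolvingGraph G).Adj w₂ v}.ncard ≤ 1 := by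
  by_contra! h
  obtain ⟨u, v, ⟨hu₁, hu₂⟩, ⟨hv₁, hv₂⟩, huv⟩ := (Set.one_lt_ncard_iff (Set.toFinite _)).mp h
  obtain ⟨u', v', hadj, hv', hu'⟩ := hG.exists_strongResolvingGraph_adj_dist_eq_add huv
  have hu : ¬ G.maxDistant u' u := hG.not_maxDistant_of_dist_eq_add huv.symm hu'
  have hv : ¬ G.maxDistant v' v := hG.not_maxDistant_of_dist_eq_add huv hv'
  rcases hc u' v' hadj with rfl | rfl | rfl | rfl
  · exact hu hu₁.2.1
  · exact hu hu₂.2.1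
  · exact hv hv₁.2.1
  · exact hv hv₂.2.1

/-- If `{w₁, w₂}` is a vertex cover of the strong resolving graph of a connected graph `G`
with `α(G_SR) = 2`, then `w₁` and `w₂` have at most one common neighbour in `G_SR`. -/
theorem vertexCover_common_neighbours_le_one {V : Type*} [Fintype V]
    (G : SimpleGraph V) (hG : G.Connected)
    (hcov : coverNumber V (strongResolvingGraph G) = 2)
    (w₁ w₂ : V) (hne : w₁ ≠ w₂)
    (hc : ∀ u v : V, (strongResolvingGraph G).Adj u v → u = w₁ ∨ u = w₂ ∨ v = w₁ ∨ v = w₂) :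
    {v | (strongResolvingGraph G).Adj w₁ v ∧ (strongResolvingGraph G).Adj w₂ v}.ncard ≤ 1 :=
  vertexCover_common_neighbours_le_one_general G hG w₁ w₂ hc
end

section
/- If a connected graph G has strong dimension 2, then its strong resolving graph G_SR contains no subgraph isomorphic to K_{2,2}. -/
open SimpleGraph

/-
If `u, v` are mutually maximally distant, then `v` lies on no shortest `u`–`w` path with
`w ≠ v`: the neighbour of `v` one step closer to `w` would be farther from `u` than `v` is.
Hence a strong resolving set is a vertex cover of `G_SR`, and one with two elements must be
a side `{a, b}` of any `K_{2,2}` in `G_SR`. But then nothing strongly resolves the other side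
`{c, d}`, since `a` and `b` are mutually maximally distant from both `c` and `d`.
-/

lemma SimpleGraph.Reachable.exists_adj_dist_add_one_eq_s11 {V : Type*} {G : SimpleGraph V}
    {u v : V} (h : G.Reachable u v) (huv : u ≠ v) :
    ∃ x, G.Adj u x ∧ G.dist x v + 1 = G.dist u v := by
  obtain ⟨p, hp⟩ := h.exists_walk_length_eq_dist
  cases p with
  | nil => exact absurd rfl huv
  | @cons _ x _ hadj q =>
    refine ⟨x, hadj, le_antisymm ?_ ?_⟩
    · rw [← hp, Walk.length_cons]
      exact Nat.add_le_add_right (dist_le q) 1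
    · rw [← dist_eq_one_iff_adj.mpr hadj, add_comm]
      exact hadj.reachable.dist_triangle_left v

section MutuallyMaxDistant

variable {V : Type*} {G : SimpleGraph V}

lemma mutuallyMaxDistant.symm {u v : V} (h : mutuallyMaxDistant G u v) :
    mutuallyMaxDistant G v u :=
  ⟨h.2, h.1⟩

lemma mutuallyMaxDistant.dist_ne_dist_add_dist (hG : G.Connected) {u v c : V}
    (h : mutuallyMaxDistant G u v) (hc : c ≠ v) :
    G.dist u c ≠ G.dist u v + G.dist v c := by
  intro heq
  obtain ⟨x, hvx, hx⟩ := (hG v c).exists_adj_dist_add_one_eq_s11 hc.symm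
  have hux : G.dist u x ≤ G.dist u v := h.1 x hvx
  have htri : G.dist u c ≤ G.dist u x + G.dist x c := hG.dist_triangle
  omega

lemma mutuallyMaxDistant.not_stronglyResolves (hG : G.Connected) {u v z : V}
    (hu : mutuallyMaxDistant G z u) (hv : mutuallyMaxDistant G z v) (huv : u ≠ v) :
    ¬ stronglyResolves G z u v := by
  rintro (h | h)
  · exact hv.dist_ne_dist_add_dist hG huv (by simpa [SimpleGraph.dist_comm, add_comm] using h)
  · exact hu.dist_ne_dist_add_dist hG huv.symm
      (by simpa [SimpleGraph.dist_comm, add_comm] using h)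

lemma mutuallyMaxDistant.eq_or_eq_of_stronglyResolves (hG : G.Connected) {u v w : V}
    (h : mutuallyMaxDistant G u v) (hw : stronglyResolves G w u v) : w = u ∨ w = v := by
  by_contra! hne
  rcases hw with hw | hw
  · exact h.dist_ne_dist_add_dist hG hne.2 hw
  · exact h.symm.dist_ne_dist_add_dist hG hne.1 hw

end MutuallyMaxDistant

lemma isStrongResolvingSet.mem_or_mem_of_adj {V : Type*} {G : SimpleGraph V} {W : Set V}
    (hW : isStrongResolvingSet G W) (hG : G.Connected) {u v : V}
    (huv : (strongResolvingGraph G).Adj u v) : u ∈ W ∨ v ∈ W := by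
  obtain ⟨w, hwW, hw⟩ := hW u v huv.1
  rcases huv.2.eq_or_eq_of_stronglyResolves hG hw with rfl | rfl <;> simp [hwW]

lemma isStrongResolvingSet_univ {V : Type*} (G : SimpleGraph V) :
    isStrongResolvingSet G Set.univ :=
  fun _ v _ => ⟨v, trivial, Or.inl (by simp)⟩

lemma exists_isStrongResolvingSet_card_eq_strongDim {V : Type*} [Fintype V]
    (G : SimpleGraph V) :
    ∃ W : Finset V, W.card = strongDim V G ∧ isStrongResolvingSet G ↑W :=
  Nat.sInf_mem (s := {n | ∃ W : Finset V, W.card = n ∧ isStrongResolvingSet G ↑W})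
    ⟨_, Finset.univ, rfl, by simpa using isStrongResolvingSet_univ G⟩

lemma not_isStrongResolvingSet_pair {V : Type*} {G : SimpleGraph V} (hG : G.Connected)
    {u v z₁ z₂ : V} (huv : u ≠ v) (h₁u : (strongResolvingGraph G).Adj z₁ u)
    (h₁v : (strongResolvingGraph G).Adj z₁ v) (h₂u : (strongResolvingGraph G).Adj z₂ u)
    (h₂v : (strongResolvingGraph G).Adj z₂ v) : ¬ isStrongResolvingSet G {z₁, z₂} := by
  intro hW
  obtain ⟨w, hw, hres⟩ := hW u v huv
  rcases hw with rfl | rfl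
  · exact h₁u.2.not_stronglyResolves hG h₁v.2 huv hres
  · exact h₂u.2.not_stronglyResolves hG h₂v.2 huv hres

lemma SimpleGraph.eq_pair_of_card_eq_two_of_cover {V : Type*} [DecidableEq V]
    {H : SimpleGraph V}
    {W : Finset V} (hW : W.card = 2) (hcover : ∀ u v, H.Adj u v → u ∈ W ∨ v ∈ W)
    {a b c d : V} (hac : H.Adj a c) (had : H.Adj a d) (hbc : H.Adj b c) (hbd : H.Adj b d)
    (hab : a ≠ b) (hcd : c ≠ d) : W = {a, b} ∨ W = {c, d} := by
  have eq_pair {x y : V} (hxy : x ≠ y) (hx : x ∈ W) (hy : y ∈ W) : W = {x, y} :=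
    (Finset.eq_of_subset_of_card_le (by simp [Finset.insert_subset_iff, hx, hy])
      (by rw [hW, Finset.card_pair hxy])).symm
  by_cases ha : a ∈ W <;> by_cases hb : b ∈ W
  · exact Or.inl (eq_pair hab ha hb)
  · exact .inr (eq_pair hcd ((hcover _ _ hbc).resolve_left hb) ((hcover _ _ hbd).resolve_left hb))
  all_goals
    exact .inr (eq_pair hcd ((hcover _ _ hac).resolve_left ha) ((hcover _ _ had).resolve_left ha))

/-- If a connected graph has strong dimension 2, then its strong resolving graph contains
no subgraph isomorphic to `K_{2,2}`. -/
theorem strongDim_two_no_K22 {V : Type*} [Fintype V]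
    (G : SimpleGraph V) (hG : G.Connected) (h : strongDim V G = 2) :
    ¬ ∃ f : completeBipartiteGraph (Fin 2) (Fin 2) →g strongResolvingGraph G,
        Function.Injective f := by
  classical
  rintro ⟨f, hf⟩
  obtain ⟨W, hWcard, hW⟩ := exists_isStrongResolvingSet_card_eq_strongDim G
  have hadj (i j : Fin 2) : (strongResolvingGraph G).Adj (f (.inl i)) (f (.inr j)) :=
    f.map_adj (by simp)
  have hab : f (.inl 0) ≠ f (.inl 1) := hf.ne (by simp)
  have hcd : f (.inr 0) ≠ f (.inr 1) := hf.ne (by simp)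
  rcases SimpleGraph.eq_pair_of_card_eq_two_of_cover (h ▸ hWcard)
    (fun _ _ => hW.mem_or_mem_of_adj hG) (hadj 0 0) (hadj 0 1) (hadj 1 0) (hadj 1 1) hab hcd
    with rfl | rfl
  · exact not_isStrongResolvingSet_pair hG hcd (hadj 0 0) (hadj 0 1) (hadj 1 0) (hadj 1 1)
      (by simpa using hW)
  · exact not_isStrongResolvingSet_pair hG hab (hadj 0 0).symm (hadj 1 0).symm
      (hadj 0 1).symm (hadj 1 1).symm (by simpa using hW)
end

section
/- Let G be a non-complete connected graph with chromatic number k and color classes V_1,...,V_k in a proper k-coloring with |V_1| ≤ ... ≤ |V_k|. If there exists ℓ ≥ 1 such that |V_i| = 1 for 1 ≤ i ≤ ℓ and |V_i| > 1 for ℓ < i ≤ k, then the threshold strong dimension satisfies τ_s(G) ≤ ℓ − 1 + Σ_{i=ℓ+1}^{k} ⌈log_2 |V_i|⌉. -/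
open SimpleGraph

/-!
Let `x₀` be the vertex of the singleton colour class `0`. Give every vertex a code in
`{0, 1, 2}^J`, where `J` is a disjoint union of blocks of coordinates, one block per colour class
`i ≠ 0` (one coordinate if the class is a singleton, `⌈log₂ |V_i|⌉` otherwise), and a vertex reads
`1` outside the block of its own class. Inside a block, `d` vertices of the class are landmarks
(`0` on their own coordinate, `1` elsewhere) and the others carry distinct nonzero binary words
written with the digits `1` and `2`.

Let `H` join two vertices whose codes differ by at most one in every coordinate. Properly
coloured neighbours always meet a `1` in each coordinate, so `G ≤ H`; the all-`1` vertex `x₀` is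
adjacent to everything, so `H` has diameter two and the distance from `x` to the landmark `w j` is
exactly the `j`-th coordinate of the code of `x`. Two `H`-adjacent vertices are then strongly
resolved by any landmark at different distances from them, and two non-adjacent ones differ by two
in some coordinate, so one of them is itself the landmark of that coordinate. The landmarks thus
form a strong resolving set of `H` of size `|J|`.
-/

section StrongResolution

variable {V : Type*} {G : SimpleGraph V} {u v w x : V}

theorem stronglyResolves_self_right : stronglyResolves G w u w :=
  Or.inl (by simp)

theorem stronglyResolves_self_left : stronglyResolves G w w v :=
  Or.inr (by simp)

theorem stronglyResolves_of_adj (huv : G.Adj u v) (h : G.dist u w ≠ G.dist v w) :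
    stronglyResolves G w u v := by
  have huw := huv.reachable.dist_triangle_left w
  have hvw := huv.symm.reachable.dist_triangle_left w
  unfold stronglyResolves
  rw [dist_eq_one_iff_adj.2 huv] at huw ⊢
  rw [dist_eq_one_iff_adj.2 huv.symm] at hvw ⊢
  omega

theorem dist_eq_two_of_adj_of_adj (hux : G.Adj u x) (hxv : G.Adj x v) (huv : u ≠ v)
    (hnadj : ¬ G.Adj u v) : G.dist u v = 2 := by
  have hle : G.dist u v ≤ 2 := dist_le (.cons hux (.cons hxv .nil))
  have hlt := (hux.reachable.trans hxv.reachable).one_lt_dist_of_ne_of_not_adj huv hnadj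
  omega

end StrongResolution

def codeGraph {V J : Type*} (φ : V → J → ℕ) : SimpleGraph V where
  Adj u v := u ≠ v ∧ ∀ j, φ u j ≤ φ v j + 1 ∧ φ v j ≤ φ u j + 1
  symm := ⟨fun _ _ h => ⟨h.1.symm, fun j => (h.2 j).symm⟩⟩
  loopless := ⟨fun _ h => h.1 rfl⟩

theorem codeGraph_adj {V J : Type*} {φ : V → J → ℕ} {u v : V} :
    (codeGraph φ).Adj u v ↔ u ≠ v ∧ ∀ j, φ u j ≤ φ v j + 1 ∧ φ v j ≤ φ u j + 1 :=
  Iff.rfl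

structure IsLandmarkCode {V J : Type*} (φ : V → J → ℕ) (w : J → V) : Prop where
  injective : Function.Injective φ
  le_two : ∀ x j, φ x j ≤ 2
  eq_zero_iff : ∀ x j, φ x j = 0 ↔ x = w j
  apply_landmark_of_ne : ∀ j j', j ≠ j' → φ (w j) j' = 1

structure IsBlockCode {S D : Type*} (ψ : S → D → ℕ) (s : D → S) : Prop
    extends IsLandmarkCode ψ s where
  ne_one : ∀ x, ψ x ≠ 1

namespace IsLandmarkCode

variable {V J : Type*} {φ : V → J → ℕ} {w : J → V} {x₀ : V}

theorem apply_landmark_self (hφ : IsLandmarkCode φ w) (j : J) : φ (w j) j = 0 :=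
  (hφ.eq_zero_iff _ _).2 rfl

theorem codeGraph_adj_center (hφ : IsLandmarkCode φ w) (hx₀ : φ x₀ = 1) {v : V} (hv : v ≠ x₀) :
    (codeGraph φ).Adj v x₀ := by
  refine codeGraph_adj.2 ⟨hv, fun j => ?_⟩
  have := hφ.le_two v j
  rw [hx₀, Pi.one_apply]
  omega

theorem codeGraph_adj_landmark (hφ : IsLandmarkCode φ w) {x : V} {j : J} (hx : φ x j = 1) :
    (codeGraph φ).Adj x (w j) := by
  refine codeGraph_adj.2 ⟨fun h => by simp [h, hφ.apply_landmark_self] at hx, fun j' => ?_⟩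
  have := hφ.le_two x j'
  rcases eq_or_ne j j' with rfl | hj
  · rw [hx, hφ.apply_landmark_self]
    omega
  · rw [hφ.apply_landmark_of_ne j j' hj]
    omega

theorem dist_codeGraph_landmark (hφ : IsLandmarkCode φ w) (hx₀ : φ x₀ = 1) (x : V) (j : J) :
    (codeGraph φ).dist x (w j) = φ x j := by
  have hx := hφ.le_two x j
  have hw := hφ.apply_landmark_self j
  interval_cases h : φ x j
  · rw [(hφ.eq_zero_iff x j).1 h, dist_self]
  · exact dist_eq_one_iff_adj.2 (hφ.codeGraph_adj_landmark h)
  · have hxx₀ : x ≠ x₀ := by rintro rfl; simp [hx₀] at h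
    have hwx₀ : w j ≠ x₀ := by
      rintro h'
      simp [h', hx₀] at hw
    refine dist_eq_two_of_adj_of_adj (hφ.codeGraph_adj_center hx₀ hxx₀)
      (hφ.codeGraph_adj_center hx₀ hwx₀).symm (by rintro rfl; omega) fun hadj => ?_
    have := ((codeGraph_adj.1 hadj).2 j).1
    omega

theorem isStrongResolvingSet_codeGraph (hφ : IsLandmarkCode φ w) (hx₀ : φ x₀ = 1) :
    isStrongResolvingSet (codeGraph φ) (Set.range w) := by
  intro u v huv
  by_cases hadj : (codeGraph φ).Adj u v
  · obtain ⟨j, hj⟩ := Function.ne_iff.1 (hφ.injective.ne huv)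
    refine ⟨w j, ⟨j, rfl⟩, stronglyResolves_of_adj hadj ?_⟩
    rwa [hφ.dist_codeGraph_landmark hx₀, hφ.dist_codeGraph_landmark hx₀]
  · obtain ⟨j, hj⟩ : ∃ j, ¬ (φ u j ≤ φ v j + 1 ∧ φ v j ≤ φ u j + 1) := by
      by_contra! h
      exact hadj (codeGraph_adj.2 ⟨huv, h⟩)
    have := hφ.le_two u j
    have := hφ.le_two v j
    refine ⟨w j, ⟨j, rfl⟩, ?_⟩
    rcases (by omega : φ u j = 0 ∨ φ v j = 0) with h | h
    · rw [(hφ.eq_zero_iff u j).1 h]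
      exact stronglyResolves_self_left
    · rw [(hφ.eq_zero_iff v j).1 h]
      exact stronglyResolves_self_right

theorem thresholdStrongDim_le_card [Fintype V] [Fintype J] {G : SimpleGraph V}
    (hφ : IsLandmarkCode φ w) (hx₀ : φ x₀ = 1) (hG : G ≤ codeGraph φ) :
    thresholdStrongDim V G ≤ Fintype.card J := by
  classical
  have hW : isStrongResolvingSet (codeGraph φ) ↑(Finset.univ.image w) := by
    simpa using hφ.isStrongResolvingSet_codeGraph hx₀
  exact (Nat.sInf_le ⟨codeGraph φ, hG, _, rfl, hW⟩ :
    thresholdStrongDim V G ≤ _).trans Finset.card_image_le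

end IsLandmarkCode

theorem Nat.exists_lt_testBit_ne {a b d : ℕ} (hab : a ≠ b) (ha : a < 2 ^ d) (hb : b < 2 ^ d) :
    ∃ r < d, a.testBit r ≠ b.testBit r := by
  obtain ⟨r, hr⟩ := Nat.exists_testBit_ne_of_ne hab
  refine ⟨r, lt_of_not_ge fun hdr => hr ?_, hr⟩
  have hpow : 2 ^ d ≤ 2 ^ r := Nat.pow_le_pow_right two_pos hdr
  rw [Nat.testBit_lt_two_pow (ha.trans_le hpow), Nat.testBit_lt_two_pow (hb.trans_le hpow)]

/-- The first `d` elements of `Fin n` are landmarks; the element `q ≥ d` is coded by the binary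
digits of `q - d + 1`, a nonzero number below `2 ^ d` when `n < 2 ^ d + d`. -/
def binaryBlockCode (d n : ℕ) (q : Fin n) (r : Fin d) : ℕ :=
  if (q : ℕ) < d then (if (q : ℕ) = r then 0 else 1)
  else if (q - d + 1).testBit r then 2 else 1

section BinaryBlockCode

variable {d n : ℕ}

theorem binaryBlockCode_eq_zero_iff (hdn : d ≤ n) (q : Fin n) (r : Fin d) :
    binaryBlockCode d n q r = 0 ↔ q = Fin.castLE hdn r := by
  rw [Fin.ext_iff, Fin.val_castLE, binaryBlockCode]
  have := r.isLt
  split_ifs <;> simp <;> omega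

theorem binaryBlockCode_injective (hdn : d ≤ n) (hn : n < 2 ^ d + d) :
    Function.Injective (binaryBlockCode d n) := by
  have landmark : ∀ {q q' : Fin n} (hq : (q : ℕ) < d),
      binaryBlockCode d n q = binaryBlockCode d n q' → q = q' := fun {q q'} hq h => by
    have := (binaryBlockCode_eq_zero_iff hdn q' ⟨q, hq⟩).1
      (h ▸ (binaryBlockCode_eq_zero_iff hdn q ⟨q, hq⟩).2 rfl)
    exact Fin.ext (by simp [this])
  intro q q' h
  by_cases hq : (q : ℕ) < d
  · exact landmark hq h
  by_cases hq' : (q' : ℕ) < d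
  · exact (landmark hq' h.symm).symm
  by_contra hne
  obtain ⟨r, hr, hbit⟩ := Nat.exists_lt_testBit_ne (a := q - d + 1) (b := q' - d + 1)
    (d := d) (by omega) (by omega) (by omega)
  have := congrFun h ⟨r, hr⟩
  simp only [binaryBlockCode, if_neg hq, if_neg hq'] at this
  split_ifs at this <;> simp_all

theorem binaryBlockCode_ne_one (hn : n < 2 ^ d + d) (q : Fin n) : binaryBlockCode d n q ≠ 1 := by
  intro h
  by_cases hq : (q : ℕ) < d
  · simpa [binaryBlockCode, hq] using congrFun h ⟨q, hq⟩
  obtain ⟨r, hr, hbit⟩ := Nat.exists_lt_testBit_ne (a := q - d + 1) (b := 0)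
    (d := d) (by omega) (by omega) (Nat.two_pow_pos d)
  have := congrFun h ⟨r, hr⟩
  simp [binaryBlockCode, hq] at this
  simp [this] at hbit

theorem isBlockCode_binaryBlockCode (hdn : d ≤ n) (hn : n < 2 ^ d + d) :
    IsBlockCode (binaryBlockCode d n) (Fin.castLE hdn) where
  injective := binaryBlockCode_injective hdn hn
  le_two q r := by
    unfold binaryBlockCode
    split_ifs <;> omega
  eq_zero_iff := binaryBlockCode_eq_zero_iff hdn
  apply_landmark_of_ne r r' hrr' := by
    have : (r : ℕ) ≠ r' := fun h => hrr' (Fin.ext h)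
    simp [binaryBlockCode, this]
  ne_one := binaryBlockCode_ne_one hn

end BinaryBlockCode

theorem IsBlockCode.comp_equiv {S S' D : Type*} {ψ : S → D → ℕ} {s : D → S}
    (hψ : IsBlockCode ψ s) (e : S' ≃ S) : IsBlockCode (ψ ∘ e) (e.symm ∘ s) where
  injective := hψ.injective.comp e.injective
  le_two x := hψ.le_two (e x)
  eq_zero_iff x j := by simp [hψ.eq_zero_iff, Equiv.eq_symm_apply]
  apply_landmark_of_ne j j' h := by simpa using hψ.apply_landmark_of_ne j j' h
  ne_one x := hψ.ne_one (e x)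

theorem exists_isBlockCode {S : Type*} [Finite S] {d : ℕ} (hdS : d ≤ Nat.card S)
    (hS : Nat.card S < 2 ^ d + d) : ∃ (ψ : S → Fin d → ℕ) (s : Fin d → S), IsBlockCode ψ s :=
  ⟨_, _, (isBlockCode_binaryBlockCode hdS hS).comp_equiv (Finite.equivFin S)⟩

section Glue

variable {V ι : Type*} [DecidableEq ι] {c : V → ι} {d : ι → ℕ}
  {ψ : ∀ i, {v // c v = i} → Fin (d i) → ℕ} {s : ∀ i, Fin (d i) → {v // c v = i}} {x₀ : V}

variable (c) in
def glueCode (ψ : ∀ i, {v // c v = i} → Fin (d i) → ℕ) (v : V) (j : Σ i, Fin (d i)) : ℕ :=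
  if h : c v = j.1 then ψ j.1 ⟨v, h⟩ j.2 else 1

theorem glueCode_of_eq {v : V} {i : ι} (h : c v = i) (r : Fin (d i)) :
    glueCode c ψ v ⟨i, r⟩ = ψ i ⟨v, h⟩ r :=
  dif_pos h

theorem glueCode_of_ne {v : V} {j : Σ i, Fin (d i)} (h : c v ≠ j.1) : glueCode c ψ v j = 1 :=
  dif_neg h

theorem glueCode_eq_one_or (u v : V) (huv : c u ≠ c v) (j : Σ i, Fin (d i)) :
    glueCode c ψ u j = 1 ∨ glueCode c ψ v j = 1 := by
  by_cases hu : c u = j.1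
  · exact .inr (glueCode_of_ne (hu ▸ huv.symm))
  · exact .inl (glueCode_of_ne hu)

theorem glueCode_center (hd₀ : d (c x₀) = 0) : glueCode c ψ x₀ = 1 := by
  ext ⟨i, r⟩
  refine glueCode_of_ne fun h => ?_
  subst h
  exact Fin.elim0 (hd₀ ▸ r)

theorem glueCode_ne_of_ne {u v : V} (huv : c u ≠ c v) (hu : ψ (c u) ⟨u, rfl⟩ ≠ 1) :
    glueCode c ψ u ≠ glueCode c ψ v := fun h => by
  obtain ⟨r, hr⟩ := Function.ne_iff.1 hu
  have := congrFun h ⟨c u, r⟩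
  rw [glueCode_of_eq rfl, glueCode_of_ne (Ne.symm huv)] at this
  exact hr this

theorem glueCode_injective (hx₀ : ∀ v, c v = c x₀ → v = x₀)
    (hψ : ∀ i, i ≠ c x₀ → IsBlockCode (ψ i) (s i)) : Function.Injective (glueCode c ψ) := by
  intro u v h
  by_cases hc : c u = c v
  · by_cases hu : c u = c x₀
    · rw [hx₀ u hu, hx₀ v (hc ▸ hu)]
    have hψuv : ψ (c u) ⟨u, rfl⟩ = ψ (c u) ⟨v, hc.symm⟩ := funext fun r => by
      rw [← glueCode_of_eq (ψ := ψ) rfl, ← glueCode_of_eq (ψ := ψ) hc.symm, h]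
    exact congrArg Subtype.val ((hψ _ hu).injective hψuv)
  · by_cases hu : c u = c x₀
    · have hv : c v ≠ c x₀ := hu ▸ Ne.symm hc
      exact absurd h.symm (glueCode_ne_of_ne (Ne.symm hc) ((hψ _ hv).ne_one _))
    · exact absurd h (glueCode_ne_of_ne hc ((hψ _ hu).ne_one _))

theorem isLandmarkCode_glueCode (hx₀ : ∀ v, c v = c x₀ → v = x₀) (hd₀ : d (c x₀) = 0)
    (hψ : ∀ i, i ≠ c x₀ → IsBlockCode (ψ i) (s i)) :
    IsLandmarkCode (glueCode c ψ) (fun j => s j.1 j.2) := by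
  have hne : ∀ j : Σ i, Fin (d i), j.1 ≠ c x₀ := fun ⟨i, r⟩ h => by
    subst h
    exact Fin.elim0 (hd₀ ▸ r)
  refine
    { injective := glueCode_injective hx₀ hψ
      le_two := fun v j => ?_
      eq_zero_iff := fun v ⟨i, r⟩ => ?_
      apply_landmark_of_ne := fun ⟨i, r⟩ ⟨i', r'⟩ hj => ?_ }
  · by_cases h : c v = j.1
    · exact (glueCode_of_eq h j.2).trans_le ((hψ _ (hne j)).le_two _ _)
    · exact (glueCode_of_ne h).trans_le one_le_two
  · by_cases h : c v = i
    · rw [glueCode_of_eq h, (hψ i (hne ⟨i, r⟩)).eq_zero_iff, Subtype.ext_iff]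
    · rw [glueCode_of_ne h]
      refine iff_of_false one_ne_zero ?_
      rintro rfl
      exact h (s i r).2
  · rcases eq_or_ne i i' with rfl | hii
    · rw [glueCode_of_eq (s i r).2]
      exact (hψ i (hne ⟨i, r⟩)).apply_landmark_of_ne r r' (by rintro rfl; exact hj rfl)
    · exact glueCode_of_ne fun h => hii ((s i r).2.symm.trans h)

theorem exists_isLandmarkCode_of_forall_isBlockCode (c : V → ι) (d : ι → ℕ) (x₀ : V)
    (hx₀ : ∀ v, c v = c x₀ → v = x₀) (hd₀ : d (c x₀) = 0)
    (hblock : ∀ i, i ≠ c x₀ → ∃ (ψ : {v // c v = i} → Fin (d i) → ℕ)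
      (s : Fin (d i) → {v // c v = i}), IsBlockCode ψ s) :
    ∃ (φ : V → (Σ i, Fin (d i)) → ℕ) (w : (Σ i, Fin (d i)) → V), IsLandmarkCode φ w ∧
      φ x₀ = 1 ∧ ∀ u v, c u ≠ c v → ∀ j, φ u j = 1 ∨ φ v j = 1 := by
  have : ∀ i, ∃ (ψ : {v // c v = i} → Fin (d i) → ℕ) (s : Fin (d i) → {v // c v = i}),
      i ≠ c x₀ → IsBlockCode ψ s := fun i => by
    by_cases hi : i = c x₀
    · exact ⟨fun _ _ => 1, fun _ => ⟨x₀, hi.symm⟩, fun h => absurd hi h⟩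
    · obtain ⟨ψ, s, hψ⟩ := hblock i hi
      exact ⟨ψ, s, fun _ => hψ⟩
  choose ψ s hψ using this
  exact ⟨glueCode c ψ, fun j => s j.1 j.2, isLandmarkCode_glueCode hx₀ hd₀ hψ,
    glueCode_center hd₀, glueCode_eq_one_or⟩

end Glue

theorem le_codeGraph_of_coloring {V ι J : Type*} {G : SimpleGraph V} (C : G.Coloring ι)
    {φ : V → J → ℕ} (hφ : ∀ x j, φ x j ≤ 2)
    (hsep : ∀ u v, C u ≠ C v → ∀ j, φ u j = 1 ∨ φ v j = 1) : G ≤ codeGraph φ := by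
  intro u v huv
  refine codeGraph_adj.2 ⟨huv.ne, fun j => ?_⟩
  have := hφ u j
  have := hφ v j
  rcases hsep u v (C.valid huv) j with h | h <;> omega

def classWidth (ℓ i m : ℕ) : ℕ :=
  if ℓ ≤ i then Nat.clog 2 m else if i = 0 then 0 else 1

theorem exists_isBlockCode_classWidth {S : Type*} [Finite S] {ℓ i : ℕ} (hi : i ≠ 0)
    (hsmall : i < ℓ → Nat.card S = 1) (hbig : ℓ ≤ i → 1 < Nat.card S) :
    ∃ (ψ : S → Fin (classWidth ℓ i (Nat.card S)) → ℕ) (s : _ → S), IsBlockCode ψ s := by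
  by_cases h : ℓ ≤ i
  · have hpos := Nat.clog_pos one_lt_two (hbig h)
    rw [classWidth, if_pos h]
    exact exists_isBlockCode ((Nat.clog_le_iff_le_pow one_lt_two).2 Nat.lt_two_pow_self.le)
      ((Nat.le_pow_clog one_lt_two _).trans_lt (by omega))
  · have hS := hsmall (by omega)
    rw [classWidth, if_neg h, if_neg hi]
    exact exists_isBlockCode hS.ge (by omega)

theorem sum_classWidth {k ℓ : ℕ} (hℓk : ℓ ≤ k) (m : Fin k → ℕ) :
    ∑ i : Fin k, classWidth ℓ i (m i) =
      ℓ - 1 + ∑ i ∈ Finset.univ.filter (fun i : Fin k => ℓ ≤ (i : ℕ)), Nat.clog 2 (m i) := by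
  simp only [classWidth]
  rw [Finset.sum_ite, add_comm]
  congr 1
  rw [Finset.sum_ite, Finset.sum_const_zero, zero_add, Finset.sum_const, smul_eq_mul, mul_one,
    Finset.filter_filter, ← Finset.card_map Fin.valEmbedding, ← Nat.card_Ico 1 ℓ]
  congr 1
  ext n
  simp only [Finset.mem_map, Finset.mem_filter, Finset.mem_univ, true_and,
    Fin.valEmbedding_apply, Finset.mem_Ico]
  constructor
  · rintro ⟨a, ha, rfl⟩
    omega
  · exact fun hn => ⟨⟨n, by omega⟩, by simp only; omega, rfl⟩

theorem thresholdStrongDim_le_of_coloring_singletons_general {V : Type*} [Fintype V]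
    (G : SimpleGraph V)
    (k : ℕ) (C : G.Coloring (Fin k))
    (ℓ : ℕ) (hℓ1 : 1 ≤ ℓ) (hℓk : ℓ ≤ k)
    (hsmall : ∀ i : Fin k, (i : ℕ) < ℓ → {v | C v = i}.ncard = 1)
    (hbig : ∀ i : Fin k, ℓ ≤ (i : ℕ) → 1 < {v | C v = i}.ncard) :
    thresholdStrongDim V G ≤
      ℓ - 1 + ∑ i ∈ Finset.univ.filter (fun i : Fin k => ℓ ≤ (i : ℕ)),
        Nat.clog 2 {v | C v = i}.ncard := by
  obtain ⟨x₀, hx₀⟩ := Set.ncard_eq_one.1 (hsmall ⟨0, by omega⟩ hℓ1)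
  have hCx₀ : C x₀ = ⟨0, by omega⟩ := (Set.ext_iff.1 hx₀ x₀).2 rfl
  set d : Fin k → ℕ := fun i => classWidth ℓ i {v | C v = i}.ncard
  obtain ⟨φ, w, hφ, hφx₀, hsep⟩ := exists_isLandmarkCode_of_forall_isBlockCode C d x₀
    (fun v hv => (Set.ext_iff.1 hx₀ v).1 (hv.trans hCx₀)) (by simp [d, classWidth, hCx₀]; omega)
    fun i hi => exists_isBlockCode_classWidth (fun h => hi (Fin.ext (by simp [hCx₀, h])))
      (hsmall i) (hbig i)
  calc thresholdStrongDim V G ≤ Fintype.card (Σ i, Fin (d i)) :=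
        hφ.thresholdStrongDim_le_card hφx₀ (le_codeGraph_of_coloring C hφ.le_two hsep)
    _ = _ := by
      rw [Fintype.card_sigma]
      simp only [Fintype.card_fin]
      exact sum_classWidth hℓk _

/-- Upper bound for the threshold strong dimension of a non-complete graph via a proper
coloring, when the first `ℓ ≥ 1` color classes are singletons and the rest are larger. -/
theorem thresholdStrongDim_le_of_coloring_singletons {V : Type*} [Fintype V]
    (G : SimpleGraph V) (hG : G.Connected)
    (hnc : ¬ ∀ u v : V, u ≠ v → G.Adj u v)
    (k : ℕ) (hchrom : G.chromaticNumber = (k : ℕ∞)) (C : G.Coloring (Fin k))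
    (hmono : ∀ i j : Fin k, i ≤ j → {v | C v = i}.ncard ≤ {v | C v = j}.ncard)
    (ℓ : ℕ) (hℓ1 : 1 ≤ ℓ) (hℓk : ℓ ≤ k)
    (hsmall : ∀ i : Fin k, (i : ℕ) < ℓ → {v | C v = i}.ncard = 1)
    (hbig : ∀ i : Fin k, ℓ ≤ (i : ℕ) → 1 < {v | C v = i}.ncard) :
    thresholdStrongDim V G ≤
      ℓ - 1 + ∑ i ∈ Finset.univ.filter (fun i : Fin k => ℓ ≤ (i : ℕ)),
        Nat.clog 2 {v | C v = i}.ncard :=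
  thresholdStrongDim_le_of_coloring_singletons_general G k C ℓ hℓ1 hℓk hsmall hbig
end

section
/- Let G be a non-complete connected graph with chromatic number k and color classes V_1,...,V_k in a proper k-coloring with 2 ≤ |V_1| ≤ ... ≤ |V_k|. Then τ_s(G) ≤ Σ_{i=1}^{k} ⌈log_2 |V_i|⌉. -/
open SimpleGraph

/-!
Put `⌈log₂ |Vᵢ|⌉` vertices of each colour class `Vᵢ` into `W`, and give every other vertex `x` of
`Vᵢ` its own proper subset `code x` of `W ∩ Vᵢ`; there are `2 ^ ⌈log₂ |Vᵢ|⌉ - 1 ≥ |Vᵢ \ W|` of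
them because `|Vᵢ| ≥ 2`. Let `A x ⊆ W` consist of `code x` and the vertices of `W` outside the
class of `x`. The sets `A x` are pairwise distinct: within a class they differ by their codes,
and for `x`, `y` in different classes, `W ∩ V_{c(x)}` lies in `A y` but not in `A x`. In the
supergraph of `G` in which `W` and `V \ W` are cliques and `x ∉ W` is joined exactly to `A x`,
two vertices `u, v ∉ W` are strongly resolved by any `w ∈ A v \ A u`, since `u v w` is then a
shortest path.
-/

open Finset

namespace SimpleGraph

variable {V : Type*}

lemma dist_eq_two_of_adj_of_adj {G : SimpleGraph V} {u v w : V} (huv : G.Adj u v)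
    (hvw : G.Adj v w) (huw : u ≠ w) (hnadj : ¬G.Adj u w) : G.dist u w = 2 :=
  le_antisymm (dist_le (.cons huv (.cons hvw .nil)))
    ((huv.reachable.trans hvw.reachable).one_lt_dist_of_ne_of_not_adj huw hnadj)

def twoCliqueGraph (W : Finset V) (A : V → Finset V) : SimpleGraph V :=
  fromRel fun u v => (u ∈ W ↔ v ∈ W) ∨ u ∈ A v

variable {W : Finset V} {A : V → Finset V}

lemma le_twoCliqueGraph {G : SimpleGraph V}
    (hG : ∀ w x, G.Adj w x → w ∈ W → x ∉ W → w ∈ A x) : G ≤ twoCliqueGraph W A := by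
  intro u v huv
  refine (fromRel_adj _ _ _).2 ⟨G.ne_of_adj huv, ?_⟩
  by_cases hu : u ∈ W <;> by_cases hv : v ∈ W
  · exact .inl (.inl (iff_of_true hu hv))
  · exact .inl (.inr (hG u v huv hu hv))
  · exact .inr (.inr (hG v u huv.symm hv hu))
  · exact .inl (.inl (iff_of_false hu hv))

lemma stronglyResolves_twoCliqueGraph (hAW : ∀ x, A x ⊆ W) {u v w : V} (hu : u ∉ W)
    (hv : v ∉ W) (huv : u ≠ v) (hwv : w ∈ A v) (hwu : w ∉ A u) :
    stronglyResolves (twoCliqueGraph W A) w u v := by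
  have hw : w ∈ W := hAW v hwv
  have hadj_uv : (twoCliqueGraph W A).Adj u v :=
    (fromRel_adj _ _ _).2 ⟨huv, .inl (.inl (iff_of_false hu hv))⟩
  have hadj_vw : (twoCliqueGraph W A).Adj v w :=
    (fromRel_adj _ _ _).2 ⟨ne_of_mem_of_not_mem hw hv |>.symm, .inr (.inr hwv)⟩
  have hnadj_uw : ¬(twoCliqueGraph W A).Adj u w := by
    rw [twoCliqueGraph, fromRel_adj]
    rintro ⟨-, (h | h) | h | h⟩
    · exact hu (h.2 hw)
    · exact hu (hAW w h)
    · exact hu (h.1 hw)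
    · exact hwu h
  left
  rw [dist_eq_two_of_adj_of_adj hadj_uv hadj_vw (ne_of_mem_of_not_mem hw hu).symm hnadj_uw,
    dist_eq_one_iff_adj.2 hadj_uv, dist_eq_one_iff_adj.2 hadj_vw]

lemma isStrongResolvingSet_twoCliqueGraph (hAW : ∀ x, A x ⊆ W) (hA : Set.InjOn A (↑W)ᶜ) :
    isStrongResolvingSet (twoCliqueGraph W A) W := by
  intro u v huv
  by_cases hv : v ∈ W
  · exact ⟨v, hv, .inl (by rw [dist_self, add_zero])⟩
  by_cases hu : u ∈ W
  · exact ⟨u, hu, .inr (by rw [dist_self, add_zero])⟩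
  obtain ⟨w, hw⟩ : ∃ w, ¬(w ∈ A u ↔ w ∈ A v) := by
    by_contra! h
    exact huv (hA hu hv (Finset.ext h))
  by_cases hwv : w ∈ A v
  · exact ⟨w, hAW v hwv, stronglyResolves_twoCliqueGraph hAW hu hv huv hwv (by tauto)⟩
  · exact ⟨w, hAW u (by tauto),
      Or.symm (stronglyResolves_twoCliqueGraph hAW hv hu huv.symm (by tauto) hwv)⟩

theorem thresholdStrongDim_le_card [Fintype V] (G : SimpleGraph V) (hAW : ∀ x, A x ⊆ W)
    (hA : Set.InjOn A (↑W)ᶜ) (hG : ∀ w x, G.Adj w x → w ∈ W → x ∉ W → w ∈ A x) :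
    thresholdStrongDim V G ≤ #W :=
  Nat.sInf_le ⟨_, le_twoCliqueGraph hG, W, rfl, isStrongResolvingSet_twoCliqueGraph hAW hA⟩

end SimpleGraph

lemma Finset.exists_subset_injOn_ssubsets {α : Type*} [DecidableEq α] (S : Finset α)
    (hS : 2 ≤ #S) : ∃ T ⊆ S, #T = Nat.clog 2 #S ∧
      ∃ code : α → Finset α, Set.InjOn code ↑(S \ T) ∧ ∀ x ∈ S \ T, code x ⊂ T := by
  set t := Nat.clog 2 #S
  have hpow : #S ≤ 2 ^ t := Nat.le_pow_clog one_lt_two _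
  have ht_pos : 0 < t := Nat.clog_pos one_lt_two hS
  have ht_le : t ≤ #S := (Nat.clog_le_iff_le_pow one_lt_two).2 Nat.lt_two_pow_self.le
  obtain ⟨T, hTS, hT⟩ := exists_subset_card_eq ht_le
  have hcard : #(S \ T) ≤ #T.ssubsets := by
    rw [card_sdiff_of_subset hTS, ssubsets, card_erase_of_mem (mem_powerset_self _),
      card_powerset, hT]
    omega
  obtain ⟨code, hmaps, hinj⟩ := (S \ T).finite_toSet.exists_injOn_of_encard_le
    (t := (T.ssubsets : Set (Finset α)))
    (by simpa only [Set.encard_coe_eq_coe_finsetCard, Nat.cast_le])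
  exact ⟨T, hTS, hT, code, hinj, fun x hx => mem_ssubsets.1 (hmaps hx)⟩

lemma Finset.injOn_filter_ne_or_mem {V ι : Type*} [DecidableEq V] [DecidableEq ι] (C : V → ι)
    (W : Finset V) (code : V → Finset V) (hcode : ∀ x ∉ W, code x ⊂ {w ∈ W | C w = C x})
    (hinj : ∀ x ∉ W, ∀ y ∉ W, C x = C y → code x = code y → x = y) :
    Set.InjOn (fun x => {w ∈ W | C w ≠ C x ∨ w ∈ code x}) (↑W)ᶜ := by
  have hclass : ∀ i, ∀ y ∉ W, {w ∈ {w ∈ W | C w ≠ C y ∨ w ∈ code y} | C w = i} =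
      if i = C y then code y else {w ∈ W | C w = i} := by
    intro i y hy
    ext w
    have hwy : w ∈ code y → w ∈ {w ∈ W | C w = C y} := fun h => (hcode y hy).subset h
    simp only [mem_filter] at hwy ⊢
    split_ifs with hi <;> aesop
  intro u hu v hv huv
  have h := congrArg (filter (C · = C u)) huv
  simp only [hclass _ _ hu, hclass _ _ hv, if_true] at h
  by_cases hC : C u = C v
  · simp only [hC, if_true] at h
    exact hinj u hu v hv hC h
  · simp only [hC, if_false] at h
    exact absurd h (hcode u hu).ne

theorem SimpleGraph.Coloring.thresholdStrongDim_le_sum_clog {V ι : Type*} [Fintype V]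
    [Fintype ι] [DecidableEq ι] {G : SimpleGraph V} (C : G.Coloring ι)
    (hC : ∀ i, 2 ≤ #{v | C v = i}) :
    thresholdStrongDim V G ≤ ∑ i, Nat.clog 2 #{v | C v = i} := by
  classical
  choose T hTS hT code hinj hcode using fun i => exists_subset_injOn_ssubsets _ (hC i)
  set W := univ.biUnion T
  have hWC : ∀ i, {v ∈ W | C v = i} = T i := by
    intro i
    ext v
    simp only [W, mem_filter, mem_biUnion, mem_univ, true_and]
    constructor
    · rintro ⟨⟨j, hj⟩, rfl⟩
      rwa [(mem_filter.1 (hTS j hj)).2]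
    · exact fun hv => ⟨⟨i, hv⟩, (mem_filter.1 (hTS i hv)).2⟩
  have hmem : ∀ x ∉ W, x ∈ ({v | C v = C x} : Finset V) \ T (C x) := fun x hx =>
    mem_sdiff.2 ⟨mem_filter.2 ⟨mem_univ x, rfl⟩,
      fun h => hx (subset_biUnion_of_mem T (mem_univ _) h)⟩
  have hWcard : #W = ∑ i, Nat.clog 2 #{v | C v = i} := by
    rw [card_eq_sum_card_fiberwise fun v _ => mem_univ (C v)]
    simp only [hWC, hT]
  rw [← hWcard]
  refine thresholdStrongDim_le_card G (A := fun x => {w ∈ W | C w ≠ C x ∨ w ∈ code (C x) x})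
    (fun _ => filter_subset _ _) ?_ fun w x hwx hw _ => mem_filter.2 ⟨hw, .inl (C.valid hwx)⟩
  refine injOn_filter_ne_or_mem C W (fun x => code (C x) x)
    (fun x hx => hWC (C x) ▸ hcode _ x (hmem x hx)) fun x hx y hy hxy h => ?_
  exact hinj (C x) (hmem x hx) (hxy ▸ hmem y hy) (h.trans (by rw [hxy]))

theorem thresholdStrongDim_le_of_coloring_general {V : Type*} [Fintype V]
    (G : SimpleGraph V)
    (k : ℕ) (C : G.Coloring (Fin k))
    (hbig : ∀ i : Fin k, 2 ≤ {v | C v = i}.ncard) :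
    thresholdStrongDim V G ≤ ∑ i : Fin k, Nat.clog 2 {v | C v = i}.ncard := by
  have hncard : ∀ i, {v | C v = i}.ncard = #{v | C v = i} := fun i => by
    rw [Set.ncard_eq_toFinset_card', Set.toFinset_ofPred]
  simp only [hncard] at hbig ⊢
  exact C.thresholdStrongDim_le_sum_clog hbig

/-- Upper bound for the threshold strong dimension of a non-complete graph via a proper
coloring all of whose color classes have at least two vertices. -/
theorem thresholdStrongDim_le_of_coloring {V : Type*} [Fintype V]
    (G : SimpleGraph V) (hG : G.Connected)
    (hnc : ¬ ∀ u v : V, u ≠ v → G.Adj u v)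
    (k : ℕ) (hchrom : G.chromaticNumber = (k : ℕ∞)) (C : G.Coloring (Fin k))
    (hmono : ∀ i j : Fin k, i ≤ j → {v | C v = i}.ncard ≤ {v | C v = j}.ncard)
    (hbig : ∀ i : Fin k, 2 ≤ {v | C v = i}.ncard) :
    thresholdStrongDim V G ≤ ∑ i : Fin k, Nat.clog 2 {v | C v = i}.ncard :=
  thresholdStrongDim_le_of_coloring_general G k C hbig
end

section
/- A tree T has strong dimension ℓ − 1 if and only if T has exactly ℓ leaves. -/
open SimpleGraph

/-!
In a finite tree, let `u ≠ v` and let `w` be a vertex farthest from `u` among those with `v` on a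
`u`–`w` geodesic; then `w` is a leaf. Doing this on both sides of `u`, `v` gives two distinct
leaves each strongly resolving the pair, so all leaves but one form a strong resolving set.
Conversely a leaf is never an inner vertex of a geodesic, so two leaves can only be strongly
resolved by one of themselves: a strong resolving set misses at most one leaf.
-/

namespace SimpleGraph

variable {V : Type*} {G : SimpleGraph V}

def leafSet (G : SimpleGraph V) : Set V := {v | (G.neighborSet v).ncard = 1}

lemma Connected.eq_of_dist_eq_add_of_dist_eq_add {u v w : V} (hG : G.Connected)
    (hu : G.dist u w = G.dist u v + G.dist v w) (hv : G.dist v w = G.dist v u + G.dist u w) :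
    u = v :=
  hG.dist_eq_zero_iff.mp (by have := G.dist_comm (u := u) (v := v); omega)

lemma Connected.eq_of_dist_eq_add_of_subsingleton_neighborSet {u v w : V} (hG : G.Connected)
    (hu : (G.neighborSet u).Subsingleton) (hvu : v ≠ u)
    (h : G.dist v w = G.dist v u + G.dist u w) : w = u := by
  obtain ⟨p, hp⟩ := hG.exists_walk_length_eq_dist v u
  obtain ⟨q, hq⟩ := hG.exists_walk_length_eq_dist u w
  have hpath : (p.append q).IsPath :=
    (p.append q).isPath_of_length_eq_dist (by rw [Walk.length_append, hp, hq, h])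
  by_contra hwu
  exact hpath.isTrail.not_mem_support_of_subsingleton_neighborSet (Ne.symm hvu) (Ne.symm hwu) hu
    ((p.mem_support_append_iff q).mpr (Or.inr q.start_mem_support))

lemma IsTree.eq_of_adj_of_dist_le {u w y₁ y₂ : V} (hG : G.IsTree) (h₁ : G.Adj w y₁)
    (h₂ : G.Adj w y₂) (d₁ : G.dist u y₁ ≤ G.dist u w) (d₂ : G.dist u y₂ ≤ G.dist u w) :
    y₁ = y₂ := by
  classical
  obtain ⟨p, hp, -⟩ := hG.connected.exists_path_of_dist u w
  have key : ∀ y, G.Adj w y → G.dist u y ≤ G.dist u w → y = p.penultimate := by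
    intro y hy hd
    obtain ⟨q, hq, hlen⟩ := hG.connected.exists_path_of_dist u y
    have hw : w ∉ q.support := fun hw => by
      have := q.length_takeUntil_lt_length hw hy.ne
      have := dist_le (q.takeUntil w hw)
      omega
    exact hG.isAcyclic.eq_penultimate_of_adj_end hp hy
      (hG.isAcyclic.mem_support_of_ne_mem_support_of_adj_of_isPath hp hq hy hw)
  rw [key y₁ h₁ d₁, key y₂ h₂ d₂]

lemma IsTree.exists_mem_leafSet_dist_eq_add [Finite V] {u v : V} (hG : G.IsTree) (huv : u ≠ v) :
    ∃ w ∈ G.leafSet, G.dist u w = G.dist u v + G.dist v w := by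
  have hc := hG.connected
  obtain ⟨w, hw, hmax⟩ := Set.exists_max_image {w | G.dist u w = G.dist u v + G.dist v w}
    (G.dist u) (Set.toFinite _) ⟨v, by simp⟩
  refine ⟨w, ?_, hw⟩
  have hwu : w ≠ u := by
    rintro rfl
    have := hc.pos_dist_of_ne huv
    simp only [Set.mem_ofPred_eq, dist_self] at hw
    omega
  have hnear : ∀ y, G.Adj w y → G.dist u y ≤ G.dist u w := by
    intro y hy
    by_contra! hfar
    have hwy : G.dist w y = 1 := dist_eq_one_iff_adj.mpr hy
    have := hc.dist_triangle (u := u) (v := w) (w := y)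
    have := hc.dist_triangle (u := v) (v := w) (w := y)
    have := hc.dist_triangle (u := u) (v := v) (w := y)
    have := hmax y (by simp only [Set.mem_ofPred_eq] at hw ⊢; omega)
    omega
  obtain ⟨p, -⟩ := hc.exists_walk_length_eq_dist w u
  have hsnd := p.adj_snd (Walk.not_nil_of_ne hwu)
  exact Set.ncard_eq_one.mpr ⟨p.snd, Set.eq_singleton_iff_unique_mem.mpr
    ⟨hsnd, fun y hy => hG.eq_of_adj_of_dist_le hy hsnd (hnear y hy) (hnear _ hsnd)⟩⟩

lemma IsTree.isStrongResolvingSet_leafSet_sdiff_singleton [Finite V] (hG : G.IsTree) (x : V) :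
    isStrongResolvingSet G (G.leafSet \ {x}) := by
  intro u v huv
  obtain ⟨w, hw, hdw⟩ := hG.exists_mem_leafSet_dist_eq_add huv
  obtain ⟨w', hw', hdw'⟩ := hG.exists_mem_leafSet_dist_eq_add huv.symm
  by_cases hwx : w = x
  · refine ⟨w', ⟨hw', fun hw'x => huv ?_⟩, Or.inr hdw'⟩
    rw [Set.mem_singleton_iff.mp hw'x, ← hwx] at hdw'
    exact hG.connected.eq_of_dist_eq_add_of_dist_eq_add hdw hdw'
  · exact ⟨w, ⟨hw, hwx⟩, Or.inl hdw⟩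

lemma IsTree.one_lt_ncard_leafSet [Finite V] [Nontrivial V] (hG : G.IsTree) :
    1 < G.leafSet.ncard := by
  obtain ⟨u, v, huv⟩ := exists_pair_ne V
  obtain ⟨w, hw, hdw⟩ := hG.exists_mem_leafSet_dist_eq_add huv
  obtain ⟨w', hw', hdw'⟩ := hG.exists_mem_leafSet_dist_eq_add huv.symm
  refine (Set.one_lt_ncard_iff).mpr ⟨w, w', hw, hw', fun hww' => huv ?_⟩
  rw [← hww'] at hdw'
  exact hG.connected.eq_of_dist_eq_add_of_dist_eq_add hdw hdw'

lemma Connected.ncard_leafSet_le_ncard_add_one [Finite V] {W : Set V} (hG : G.Connected)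
    (hW : isStrongResolvingSet G W) : G.leafSet.ncard ≤ W.ncard + 1 := by
  have leaf_subsingleton : ∀ z ∈ G.leafSet, (G.neighborSet z).Subsingleton := fun z hz => by
    obtain ⟨y, hy⟩ := Set.ncard_eq_one.mp hz
    exact hy ▸ Set.subsingleton_singleton
  have hsub : (G.leafSet \ W).Subsingleton := by
    rintro a ⟨ha, haW⟩ b ⟨hb, hbW⟩
    by_contra hab
    obtain ⟨z, hzW, h | h⟩ := hW a b hab
    · exact hbW (hG.eq_of_dist_eq_add_of_subsingleton_neighborSet
        (leaf_subsingleton b hb) hab h ▸ hzW)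
    · exact haW (hG.eq_of_dist_eq_add_of_subsingleton_neighborSet
        (leaf_subsingleton a ha) (Ne.symm hab) h ▸ hzW)
  calc G.leafSet.ncard ≤ (G.leafSet \ W).ncard + W.ncard := Set.ncard_le_ncard_sdiff_add_ncard _ _
    _ ≤ W.ncard + 1 := by have := Set.ncard_le_one_iff_subsingleton.mpr hsub; omega

end SimpleGraph

section strongDim

variable {V : Type*} [Fintype V] {G : SimpleGraph V}

lemma strongDim_le_ncard {W : Set V} (hW : isStrongResolvingSet G W) : strongDim V G ≤ W.ncard :=
  Nat.sInf_le ⟨W.toFinite.toFinset, (Set.ncard_eq_toFinset_card W).symm, by simpa using hW⟩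

lemma exists_isStrongResolvingSet_ncard_eq_strongDim :
    ∃ W : Set V, isStrongResolvingSet G W ∧ W.ncard = strongDim V G := by
  have hne : {n | ∃ W : Finset V, W.card = n ∧ isStrongResolvingSet G ↑W}.Nonempty :=
    ⟨_, Finset.univ, rfl, fun u v _ => ⟨u, Finset.mem_coe.mpr (Finset.mem_univ u), Or.inr (by simp)⟩⟩
  obtain ⟨W, hcard, hW⟩ := Nat.sInf_mem hne
  exact ⟨W, hW, (Set.ncard_coe_finset W).trans hcard⟩

lemma strongDim_eq_zero_of_subsingleton [Subsingleton V] : strongDim V G = 0 :=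
  Nat.eq_zero_of_le_zero <| (strongDim_le_ncard (W := ∅)
    fun u v huv => absurd (Subsingleton.elim u v) huv).trans_eq (Set.ncard_empty V)

lemma SimpleGraph.IsTree.strongDim_eq_ncard_leafSet_sub_one [Nontrivial V] (hG : G.IsTree) :
    strongDim V G = G.leafSet.ncard - 1 := by
  obtain ⟨x, hx⟩ : G.leafSet.Nonempty :=
    Set.nonempty_of_ncard_ne_zero (by have := hG.one_lt_ncard_leafSet; omega)
  apply le_antisymm
  · calc strongDim V G ≤ (G.leafSet \ {x}).ncard :=
          strongDim_le_ncard (hG.isStrongResolvingSet_leafSet_sdiff_singleton x)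
      _ = G.leafSet.ncard - 1 := Set.ncard_sdiff_singleton_of_mem hx
  · obtain ⟨W, hW, hcard⟩ := exists_isStrongResolvingSet_ncard_eq_strongDim (G := G)
    have := hG.connected.ncard_leafSet_le_ncard_add_one hW
    omega

end strongDim

/-- A tree has strong dimension `ℓ - 1` iff it has exactly `ℓ` leaves. -/
theorem strongDim_tree_iff_leaves {V : Type*} [Fintype V]
    (T : SimpleGraph V) (hT : T.IsTree) (ℓ : ℕ) (hℓ : 2 ≤ ℓ) :
    strongDim V T = ℓ - 1 ↔ {v : V | (T.neighborSet v).ncard = 1}.ncard = ℓ := by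
  change strongDim V T = ℓ - 1 ↔ T.leafSet.ncard = ℓ
  rcases subsingleton_or_nontrivial V with _ | _
  · have := Set.ncard_le_one_of_subsingleton T.leafSet
    rw [strongDim_eq_zero_of_subsingleton]
    omega
  · have := hT.one_lt_ncard_leafSet
    rw [hT.strongDim_eq_ncard_leafSet_sub_one]
    omega
end

section
/- For every cycle C_n with n ≥ 4, the threshold strong dimension of C_n equals 2, while the strong isometric dimension of C_n equals ⌈n/2⌉; hence threshold strong dimension and strong isometric dimension are distinct graph parameters. -/
open SimpleGraph

/-- The strong isometric dimension: the smallest `k` such that `G` embeds isometrically in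
the strong product of `k` copies of some path. -/
noncomputable def strongIsoDim (V : Type*) (G : SimpleGraph V) : ℕ :=
  sInf {k | ∃ (m : ℕ) (φ : V → (Fin k → Fin m)),
    ∀ u v : V, (strongPow m k).dist (φ u) (φ v) = G.dist u v}

/-!
`C_n` has bandwidth two: listing its vertices as `0, 2, 4, …` and then the odd ones backwards
places it, as a spanning subgraph, in the square of a path, where distances are `⌈|i - j| / 2⌉`
and the first two vertices strongly resolve every pair. Conversely no graph containing `C_n`
is strongly resolved by a single vertex `w`: distances to `w` would be injective, and a vertex
farthest from `w` would have its two cycle neighbours both one step closer.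

Distances to the first `⌈n/2⌉` vertices strongly resolve `C_n`, hence embed it isometrically into a
strong product of `⌈n/2⌉` paths. In any such embedding each coordinate is 1-Lipschitz and every
antipodal pair must be stretched to its full length `⌊n/2⌋` by some coordinate; a coordinate can
stretch only pairs whose base points are `⌊n/2⌋` apart, hence at most two of them.
-/

namespace SimpleGraph

variable {V : Type*} (G : SimpleGraph V)

theorem le_add_length_of_forall_adj_le {ρ : V → ℕ} (hρ : ∀ u u', G.Adj u u' → ρ u ≤ ρ u' + 1)
    {u v : V} (p : G.Walk u v) : ρ u ≤ ρ v + p.length := by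
  induction p with
  | nil => simp
  | cons h _ ih => have := hρ _ _ h; rw [Walk.length_cons]; omega

theorem reachable_and_dist_le_of_exists_adj_lt (ρ : V → ℕ) {v : V}
    (hρ : ∀ u, u ≠ v → ∃ u', G.Adj u u' ∧ ρ u' < ρ u) (u : V) :
    G.Reachable u v ∧ G.dist u v ≤ ρ u := by
  induction hu : ρ u using Nat.strong_induction_on generalizing u with
  | _ d ih =>
    obtain rfl | huv := eq_or_ne u v
    · simp
    obtain ⟨u', hadj, hlt⟩ := hρ u huv
    obtain ⟨hreach, hdist⟩ := ih _ (hu ▸ hlt) u' rfl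
    refine ⟨hadj.reachable.trans hreach, ?_⟩
    obtain ⟨p, hp⟩ := hreach.exists_walk_length_eq_dist
    have := G.dist_le (p.cons hadj)
    rw [Walk.length_cons] at this
    omega

theorem dist_eq_of_potential (ρ : V → ℕ) {v : V} (hv : ρ v = 0)
    (hadj : ∀ u u', G.Adj u u' → ρ u ≤ ρ u' + 1)
    (hstep : ∀ u, u ≠ v → ∃ u', G.Adj u u' ∧ ρ u' < ρ u) (u : V) : G.dist u v = ρ u := by
  obtain ⟨hreach, hle⟩ := G.reachable_and_dist_le_of_exists_adj_lt ρ hstep u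
  obtain ⟨p, hp⟩ := hreach.exists_walk_length_eq_dist
  have := G.le_add_length_of_forall_adj_le hadj p
  omega

end SimpleGraph

def chebyshevDist {m k : ℕ} (x y : Fin k → Fin m) : ℕ :=
  Finset.univ.sup fun i => ((x i : ℤ) - y i).natAbs

theorem natAbs_sub_le_chebyshevDist {m k : ℕ} (x y : Fin k → Fin m) (i : Fin k) :
    ((x i : ℤ) - y i).natAbs ≤ chebyshevDist x y :=
  Finset.le_sup (f := fun i => ((x i : ℤ) - y i).natAbs) (Finset.mem_univ i)

theorem chebyshevDist_le_iff {m k : ℕ} {x y : Fin k → Fin m} {d : ℕ} :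
    chebyshevDist x y ≤ d ↔ ∀ i, ((x i : ℤ) - y i).natAbs ≤ d := by
  simp [chebyshevDist]

theorem exists_natAbs_sub_eq_chebyshevDist {m k : ℕ} {x y : Fin k → Fin m}
    (h : 0 < chebyshevDist x y) : ∃ i, ((x i : ℤ) - y i).natAbs = chebyshevDist x y := by
  rcases isEmpty_or_nonempty (Fin k) with hk | hk
  · simp [chebyshevDist] at h
  · obtain ⟨i, -, hi⟩ := Finset.exists_mem_eq_sup Finset.univ Finset.univ_nonempty
      fun i => ((x i : ℤ) - y i).natAbs
    exact ⟨i, hi.symm⟩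

theorem Fin.exists_natAbs_sub_le_one_and_eq_pred {m : ℕ} (a b : Fin m) :
    ∃ c : Fin m, ((c : ℤ) - a).natAbs ≤ 1 ∧ ((c : ℤ) - b).natAbs = ((a : ℤ) - b).natAbs - 1 := by
  rcases lt_trichotomy (a : ℕ) b with h | h | h
  · exact ⟨⟨a + 1, by omega⟩, by simp; omega⟩
  · exact ⟨a, by simp, by simp [h]⟩
  · exact ⟨⟨a - 1, by omega⟩, by simp; omega⟩

theorem strongPow_dist_s18 {m k : ℕ} (x y : Fin k → Fin m) :
    (strongPow m k).dist x y = chebyshevDist x y := by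
  refine (strongPow m k).dist_eq_of_potential (chebyshevDist · y) (by simp [chebyshevDist])
    (fun u u' h => chebyshevDist_le_iff.2 fun i => ?_) (fun u hu => ?_) x
  · have := h.2 i
    have := natAbs_sub_le_chebyshevDist u' y i
    omega
  · choose c hc using fun i => Fin.exists_natAbs_sub_le_one_and_eq_pred (u i) (y i)
    obtain ⟨i₀, hi₀⟩ := Function.ne_iff.1 hu
    have hne : (u i₀ : ℤ) ≠ y i₀ := fun h => hi₀ (Fin.ext (by exact_mod_cast h))
    have hpos : 0 < chebyshevDist u y := by
      have := natAbs_sub_le_chebyshevDist u y i₀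
      omega
    refine ⟨c, ⟨fun h => ?_, fun i => by have := (hc i).1; omega⟩, ?_⟩
    · have := (hc i₀).2
      rw [← h] at this
      omega
    · have : chebyshevDist c y ≤ chebyshevDist u y - 1 := chebyshevDist_le_iff.2 fun i => by
        have := (hc i).2
        have := natAbs_sub_le_chebyshevDist u y i
        omega
      omega

namespace SimpleGraph

variable {V : Type*} {G : SimpleGraph V}

theorem Connected.injective_dist_of_isStrongResolvingSet_singleton (hG : G.Connected) {w : V}
    (hw : isStrongResolvingSet G {w}) : Function.Injective (G.dist · w) := by
  intro x y hxy
  by_contra hne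
  obtain ⟨_, rfl, hres⟩ := hw x y hne
  have := hG.pos_dist_of_ne hne
  have := hG.pos_dist_of_ne (Ne.symm hne)
  simp only at hxy
  rcases hres with h | h <;> omega

theorem Connected.exists_forall_adj_eq_of_isStrongResolvingSet_singleton [Finite V]
    (hG : G.Connected) {w : V} (hw : isStrongResolvingSet G {w}) :
    ∃ z, ∀ x y, G.Adj z x → G.Adj z y → x = y := by
  have := hG.nonempty
  have hinj := hG.injective_dist_of_isStrongResolvingSet_singleton hw
  obtain ⟨z, hz⟩ := Finite.exists_max (G.dist · w)
  have hpred : ∀ x, G.Adj z x → G.dist x w + 1 = G.dist z w := fun x hx => by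
    have := hz x
    have := hinj.ne hx.ne'
    have := hG.dist_triangle (u := z) (v := x) (w := w)
    rw [dist_eq_one_iff_adj.2 hx] at this
    omega
  exact ⟨z, fun x y hx hy => hinj (by have := hpred x hx; have := hpred y hy; simp only; omega)⟩

theorem Connected.two_le_card_of_isStrongResolvingSet [Finite V] (hG : G.Connected)
    (hdeg : ∀ z, ∃ x y, G.Adj z x ∧ G.Adj z y ∧ x ≠ y) {W : Finset V}
    (hW : isStrongResolvingSet G W) : 2 ≤ W.card := by
  by_contra! hcard
  interval_cases h : W.card
  · obtain ⟨x, y, -, -, hxy⟩ := hdeg hG.nonempty.some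
    obtain ⟨w, hw, -⟩ := hW x y hxy
    simp [Finset.card_eq_zero.1 h] at hw
  · obtain ⟨w, rfl⟩ := Finset.card_eq_one.1 h
    rw [Finset.coe_singleton] at hW
    obtain ⟨z, hz⟩ := hG.exists_forall_adj_eq_of_isStrongResolvingSet_singleton hW
    obtain ⟨x, y, hx, hy, hxy⟩ := hdeg z
    exact hxy (hz x y hx hy)

/-- The embedding is `u ↦ (dist u (w i))ᵢ`. -/
theorem Connected.exists_isometry_strongPow [Finite V] (hG : G.Connected) {k : ℕ}
    (w : Fin k → V) (hw : ∀ u v, u ≠ v → ∃ i, stronglyResolves G (w i) u v) :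
    ∃ (m : ℕ) (φ : V → Fin k → Fin m), ∀ u v, (strongPow m k).dist (φ u) (φ v) = G.dist u v := by
  have := hG.nonempty
  have hdiam : G.ediam ≠ ⊤ := connected_iff_ediam_ne_top.1 hG
  let φ : V → Fin k → Fin (G.diam + 1) :=
    fun u i => ⟨G.dist u (w i), Nat.lt_succ_of_le (dist_le_diam hdiam)⟩
  have hφ : ∀ u i, (φ u i : ℕ) = G.dist u (w i) := fun _ _ => rfl
  refine ⟨G.diam + 1, φ, fun u v => ?_⟩
  rw [strongPow_dist_s18]
  refine le_antisymm (chebyshevDist_le_iff.2 fun i => ?_) ?_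
  · have := hG.dist_triangle (u := u) (v := v) (w := w i)
    have := hG.dist_triangle (u := v) (v := u) (w := w i)
    rw [dist_comm (u := v) (v := u)] at this
    rw [hφ, hφ]
    omega
  · obtain rfl | huv := eq_or_ne u v
    · simp
    obtain ⟨i, hi⟩ := hw u v huv
    have := natAbs_sub_le_chebyshevDist (φ u) (φ v) i
    unfold stronglyResolves at hi
    rw [dist_comm (u := v) (v := u)] at hi
    rw [hφ, hφ] at this
    omega

end SimpleGraph

/-- The square of the path `0 - 1 - ⋯ - (n-1)`, transported to `V` along `e`. -/
def pathSquareAlong {V : Type*} {n : ℕ} (e : V ≃ Fin n) : SimpleGraph V where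
  Adj u v := u ≠ v ∧ ((e u : ℤ) - e v).natAbs ≤ 2
  symm := ⟨fun _ _ h => ⟨h.1.symm, by have := h.2; omega⟩⟩
  loopless := ⟨fun _ h => h.1 rfl⟩

section PathSquare

variable {V : Type*} {n : ℕ} (e : V ≃ Fin n)

theorem pathSquareAlong_dist (u v : V) :
    (pathSquareAlong e).dist u v = (((e u : ℤ) - e v).natAbs + 1) / 2 := by
  refine (pathSquareAlong e).dist_eq_of_potential (fun u => (((e u : ℤ) - e v).natAbs + 1) / 2)
    (by simp) (fun u u' h => by have := h.2; omega) (fun u hu => ?_) u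
  have hne : (e u : ℕ) ≠ e v := fun h => hu (e.injective (Fin.ext h))
  have := (e u).is_lt
  have := (e v).is_lt
  have hadj : ∀ p : Fin n, (p : ℕ) ≠ e u → ((e u : ℤ) - p).natAbs ≤ 2 →
      (pathSquareAlong e).Adj u (e.symm p) :=
    fun p hp hp2 => ⟨fun h => hp (by rw [h, Equiv.apply_symm_apply]), by simpa using hp2⟩
  by_cases hnear : ((e u : ℤ) - e v).natAbs ≤ 2
  · exact ⟨v, ⟨hu, hnear⟩, by simp; omega⟩
  rcases Nat.lt_or_gt_of_ne hne with h | h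
  · exact ⟨_, hadj ⟨e u + 2, by omega⟩ (by simp) (by simp), by simp; omega⟩
  · exact ⟨_, hadj ⟨e u - 2, by omega⟩ (by simp; omega) (by simp; omega), by simp; omega⟩

/-- The first vertex resolves every pair except an odd position below an even one, which the
second vertex resolves. -/
theorem isStrongResolvingSet_pathSquareAlong (hn : 2 ≤ n) :
    isStrongResolvingSet (pathSquareAlong e) {e.symm ⟨0, by omega⟩, e.symm ⟨1, by omega⟩} := by
  intro u v _
  have : stronglyResolves (pathSquareAlong e) (e.symm ⟨0, by omega⟩) u v ∨
      stronglyResolves (pathSquareAlong e) (e.symm ⟨1, by omega⟩) u v := by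
    simp only [stronglyResolves, pathSquareAlong_dist, Equiv.apply_symm_apply]
    omega
  rcases this with h | h
  exacts [⟨_, Set.mem_insert _ _, h⟩, ⟨_, Set.mem_insert_of_mem _ rfl, h⟩]

end PathSquare

theorem thresholdStrongDim_eq_two {V : Type*} [Fintype V] {G : SimpleGraph V} (hG : G.Connected)
    (hdeg : ∀ z, ∃ x y, G.Adj z x ∧ G.Adj z y ∧ x ≠ y) {n : ℕ} (hn : 2 ≤ n) (e : V ≃ Fin n)
    (hle : G ≤ pathSquareAlong e) : thresholdStrongDim V G = 2 := by
  classical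
  have hmem : 2 ∈ {k | ∃ H : SimpleGraph V, G ≤ H ∧
      ∃ W : Finset V, W.card = k ∧ isStrongResolvingSet H ↑W} := by
    refine ⟨pathSquareAlong e, hle, {e.symm ⟨0, by omega⟩, e.symm ⟨1, by omega⟩},
      Finset.card_pair (by simp), ?_⟩
    rw [Finset.coe_pair]
    exact isStrongResolvingSet_pathSquareAlong e hn
  refine le_antisymm (Nat.sInf_le hmem) (le_csInf ⟨2, hmem⟩ ?_)
  rintro k ⟨H, hGH, W, rfl, hW⟩
  refine (hG.mono hGH).two_le_card_of_isStrongResolvingSet (fun z => ?_) hW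
  obtain ⟨x, y, hx, hy, hxy⟩ := hdeg z
  exact ⟨x, y, hGH hx, hGH hy, hxy⟩

theorem cycleGraph_adj_iff_val {n : ℕ} (hn : 2 ≤ n) {u v : Fin n} :
    (cycleGraph n).Adj u v ↔ (u : ℕ) + 1 = v ∨ (v : ℕ) + 1 = u ∨
      (u : ℕ) + 1 = n ∧ (v : ℕ) = 0 ∨ (v : ℕ) + 1 = n ∧ (u : ℕ) = 0 := by
  rw [cycleGraph_adj']
  have := u.is_lt
  have := v.is_lt
  rcases lt_trichotomy u v with h | rfl | h
  · rw [Fin.coe_sub_iff_lt.2 h, Fin.coe_sub_iff_le.2 h.le]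
    have := Fin.lt_def.1 h
    omega
  · rw [Fin.coe_sub_iff_le.2 le_rfl]
    omega
  · rw [Fin.coe_sub_iff_lt.2 h, Fin.coe_sub_iff_le.2 h.le]
    have := Fin.lt_def.1 h
    omega

theorem cycleGraph_exists_adj_adj_ne {n : ℕ} (hn : 3 ≤ n) (z : Fin n) :
    ∃ x y, (cycleGraph n).Adj z x ∧ (cycleGraph n).Adj z y ∧ x ≠ y := by
  obtain ⟨k, rfl⟩ : ∃ k, n = k + 3 := ⟨n - 3, by omega⟩
  have := cycleGraph_degree_three_le (v := z)
  rw [← card_neighborFinset_eq_degree, Finset.card_eq_two] at this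
  obtain ⟨x, y, hxy, hz⟩ := this
  refine ⟨x, y, ?_, ?_, hxy⟩ <;> rw [← mem_neighborFinset, hz] <;> simp

def cycleDist (n : ℕ) (u v : Fin n) : ℕ :=
  min ((u : ℤ) - v).natAbs (n - ((u : ℤ) - v).natAbs)

theorem cycleGraph_dist {n : ℕ} (hn : 2 ≤ n) (u v : Fin n) :
    (cycleGraph n).dist u v = cycleDist n u v := by
  have hsucc : ∀ u : Fin n, ∃ u', (cycleGraph n).Adj u u' ∧
      ((u' : ℕ) = u + 1 ∨ (u' : ℕ) = 0 ∧ (u : ℕ) + 1 = n) := fun u => by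
    by_cases h : (u : ℕ) + 1 < n
    · exact ⟨⟨u + 1, h⟩, by rw [cycleGraph_adj_iff_val hn]; simp, by simp⟩
    · exact ⟨⟨0, by omega⟩, by rw [cycleGraph_adj_iff_val hn]; simp; omega, by simp; omega⟩
  have hpred : ∀ u : Fin n, ∃ u', (cycleGraph n).Adj u u' ∧
      ((u : ℕ) = u' + 1 ∨ (u : ℕ) = 0 ∧ (u' : ℕ) + 1 = n) := fun u => by
    by_cases h : 0 < (u : ℕ)
    · exact ⟨⟨u - 1, by omega⟩, by rw [cycleGraph_adj_iff_val hn]; simp; omega, by simp; omega⟩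
    · exact ⟨⟨n - 1, by omega⟩, by rw [cycleGraph_adj_iff_val hn]; simp; omega, by simp; omega⟩
  refine (cycleGraph n).dist_eq_of_potential (cycleDist n · v) (by simp [cycleDist])
    (fun u u' h => ?_) (fun u hu => ?_) u
  · rw [cycleGraph_adj_iff_val hn] at h
    simp only [cycleDist]
    omega
  · obtain ⟨s, hs, hsv⟩ := hsucc u
    obtain ⟨p, hp, hpv⟩ := hpred u
    have := u.is_lt
    have := v.is_lt
    have := s.is_lt
    have := p.is_lt
    have : (u : ℕ) ≠ v := fun h => hu (Fin.ext h)
    have : cycleDist n s v < cycleDist n u v ∨ cycleDist n p v < cycleDist n u v := by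
      simp only [cycleDist]
      omega
    rcases this with h | h
    exacts [⟨s, hs, h⟩, ⟨p, hp, h⟩]

/-- A vertex among the first `⌈n/2⌉` resolves any pair containing it; otherwise the vertex
`n / 2` before the larger of `u`, `v` does, with the smaller one on a geodesic towards it. -/
theorem cycleGraph_exists_stronglyResolves {n : ℕ} (hn : 2 ≤ n) {u v : Fin n} (huv : u ≠ v) :
    ∃ i : Fin ((n + 1) / 2),
      stronglyResolves (cycleGraph n) (Fin.castLE (by omega) i) u v := by
  simp only [stronglyResolves, cycleGraph_dist hn, cycleDist, Fin.val_castLE]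
  have := u.is_lt
  have := v.is_lt
  have : (u : ℕ) ≠ v := fun h => huv (Fin.ext h)
  by_cases hv : (v : ℕ) < (n + 1) / 2
  · exact ⟨⟨v, hv⟩, by simp only; omega⟩
  by_cases hu : (u : ℕ) < (n + 1) / 2
  · exact ⟨⟨u, hu⟩, by simp only; omega⟩
  rcases Nat.lt_or_gt_of_ne this with h | h
  · exact ⟨⟨v - n / 2, by omega⟩, by simp only; omega⟩
  · exact ⟨⟨u - n / 2, by omega⟩, by simp only; omega⟩

/-- `x'` is `n / 2` steps after `x`; for odd `n` it is one of the two vertices farthest from `x`. -/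
def IsAntipode (n : ℕ) (x x' : Fin n) : Prop :=
  (x' : ℕ) = x + n / 2 ∨ (x' : ℕ) + n = x + n / 2

theorem exists_isAntipode {n : ℕ} (x : Fin n) : ∃ x', IsAntipode n x x' := by
  by_cases h : (x : ℕ) + n / 2 < n
  · exact ⟨⟨x + n / 2, h⟩, Or.inl rfl⟩
  · exact ⟨⟨x + n / 2 - n, by omega⟩, Or.inr (by simp; omega)⟩

theorem cycleDist_isAntipode {n : ℕ} {x x' : Fin n} (hx' : IsAntipode n x x') :
    cycleDist n x x' = n / 2 := by
  have := x.is_lt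
  unfold IsAntipode at hx'
  simp only [cycleDist]
  omega

theorem cycleDist_isAntipode_isAntipode {n : ℕ} {x x' y y' : Fin n} (hx' : IsAntipode n x x')
    (hy' : IsAntipode n y y') : cycleDist n x' y' = cycleDist n x y := by
  have := x.is_lt
  have := y.is_lt
  unfold IsAntipode at hx' hy'
  simp only [cycleDist]
  omega

theorem cycleDist_add_cycleDist_add_two_mul_cycleDist_le {n : ℕ} {x x' y y' : Fin n}
    (hx' : IsAntipode n x x') (hy' : IsAntipode n y y') :
    cycleDist n y x' + cycleDist n x y' + 2 * cycleDist n x y ≤ n := by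
  have := x.is_lt
  have := y.is_lt
  unfold IsAntipode at hx' hy'
  simp only [cycleDist]
  omega

/-- If `f` rises along both pairs, the two rises do not fit into the cycle; if it rises along
one and falls along the other, the Lipschitz bounds on the close pairs `x, y` and `x', y'`
contradict each other. -/
theorem half_le_cycleDist_of_natAbs_sub_eq_half {n : ℕ} {f : Fin n → ℤ}
    (hf : ∀ u v, (f u - f v).natAbs ≤ cycleDist n u v) {x x' y y' : Fin n}
    (hx' : IsAntipode n x x') (hy' : IsAntipode n y y')
    (hx : (f x - f x').natAbs = n / 2) (hy : (f y - f y').natAbs = n / 2) (hxy : x ≠ y) :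
    n / 2 ≤ cycleDist n x y := by
  have hpos : 0 < cycleDist n x y := by
    have := x.is_lt
    have : (x : ℕ) ≠ y := fun h => hxy (Fin.ext h)
    simp only [cycleDist]
    omega
  have := hf x y
  have := hf x' y'
  have := hf x y'
  have := hf y x'
  rw [cycleDist_isAntipode_isAntipode hx' hy'] at *
  have := cycleDist_add_cycleDist_add_two_mul_cycleDist_le hx' hy'
  omega

theorem card_le_two_of_pairwise_half_le_cycleDist {n : ℕ} (hn : 4 ≤ n) {S : Finset (Fin n)}
    (hS : ∀ x ∈ S, ∀ y ∈ S, x ≠ y → n / 2 ≤ cycleDist n x y) : S.card ≤ 2 := by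
  by_contra! h
  obtain ⟨x, hx, y, hy, z, hz, hxy, hxz, hyz⟩ := Finset.two_lt_card.1 h
  have := hS x hx y hy hxy
  have := hS x hx z hz hxz
  have := hS y hy z hz hyz
  have := x.is_lt
  have := y.is_lt
  have := z.is_lt
  have : (x : ℕ) ≠ y := fun h => hxy (Fin.ext h)
  have : (x : ℕ) ≠ z := fun h => hxz (Fin.ext h)
  have : (y : ℕ) ≠ z := fun h => hyz (Fin.ext h)
  simp only [cycleDist] at *
  omega

theorem le_two_mul_of_cycleGraph_isometry {n k m : ℕ} (hn : 4 ≤ n) (φ : Fin n → Fin k → Fin m)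
    (hφ : ∀ u v, (strongPow m k).dist (φ u) (φ v) = (cycleGraph n).dist u v) : n ≤ k * 2 := by
  have hdist : ∀ u v, chebyshevDist (φ u) (φ v) = cycleDist n u v := fun u v => by
    rw [← strongPow_dist_s18, hφ, cycleGraph_dist (by omega)]
  choose a ha using exists_isAntipode (n := n)
  let S : Fin k → Finset (Fin n) := fun i =>
    Finset.univ.filter fun j => ((φ j i : ℤ) - φ (a j) i).natAbs = n / 2
  have hcover : Finset.univ ⊆ Finset.univ.biUnion S := fun j _ => by
    have hj := (hdist j (a j)).trans (cycleDist_isAntipode (ha j))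
    obtain ⟨i, hi⟩ := exists_natAbs_sub_eq_chebyshevDist (hj ▸ (by omega : 0 < n / 2))
    exact Finset.mem_biUnion.2
      ⟨i, Finset.mem_univ i, Finset.mem_filter.2 ⟨Finset.mem_univ j, hi.trans hj⟩⟩
  have hS : ∀ i ∈ Finset.univ, (S i).card ≤ 2 := fun i _ =>
    card_le_two_of_pairwise_half_le_cycleDist hn fun x hx y hy hxy =>
      half_le_cycleDist_of_natAbs_sub_eq_half (f := fun u => (φ u i : ℤ))
        (fun u v => hdist u v ▸ natAbs_sub_le_chebyshevDist (φ u) (φ v) i) (ha x) (ha y)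
        (Finset.mem_filter.1 hx).2 (Finset.mem_filter.1 hy).2 hxy
  calc n = (Finset.univ : Finset (Fin n)).card := by simp
    _ ≤ (Finset.univ.biUnion S).card := Finset.card_le_card hcover
    _ ≤ k * 2 := by simpa using Finset.card_biUnion_le_card_mul Finset.univ S 2 hS

/-- Lists the even positions upwards, then the odd ones downwards, so that consecutive vertices
of `C_n` sit at most two positions apart. -/
def zigzag (n : ℕ) (j : Fin n) : Fin n :=
  ⟨if (j : ℕ) < (n + 1) / 2 then 2 * j else 2 * (n - 1 - j) + 1, by split_ifs <;> omega⟩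

theorem zigzag_injective (n : ℕ) : Function.Injective (zigzag n) := fun a b h => by
  have := congrArg Fin.val h
  simp only [zigzag] at this
  split_ifs at this <;> omega

noncomputable def zigzagEquiv (n : ℕ) : Fin n ≃ Fin n :=
  Equiv.ofBijective (zigzag n) (Finite.injective_iff_bijective.1 (zigzag_injective n))

theorem cycleGraph_le_pathSquareAlong_zigzagEquiv {n : ℕ} (hn : 2 ≤ n) :
    cycleGraph n ≤ pathSquareAlong (zigzagEquiv n) := fun u v h => by
  refine ⟨h.ne, ?_⟩
  rw [cycleGraph_adj_iff_val hn] at h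
  simp only [zigzagEquiv, Equiv.ofBijective_apply, zigzag]
  split_ifs <;> omega

/-- For every cycle `C_n` with `n ≥ 4`, `τ_s(C_n) = 2` while `sdim(C_n) = ⌈n/2⌉`. -/
theorem cycle_thresholdStrongDim_and_strongIsoDim (n : ℕ) (hn : 4 ≤ n) :
    thresholdStrongDim (Fin n) (SimpleGraph.cycleGraph n) = 2 ∧
    strongIsoDim (Fin n) (SimpleGraph.cycleGraph n) = (n + 1) / 2 := by
  have h2 : 2 ≤ n := by omega
  have hconn : (cycleGraph n).Connected :=
    (connected_iff _).2 ⟨cycleGraph_preconnected, ⟨⟨0, by omega⟩⟩⟩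
  refine ⟨thresholdStrongDim_eq_two hconn (cycleGraph_exists_adj_adj_ne (by omega)) h2
    (zigzagEquiv n) (cycleGraph_le_pathSquareAlong_zigzagEquiv h2), ?_⟩
  have hmem := hconn.exists_isometry_strongPow _ fun _ _ => cycleGraph_exists_stronglyResolves h2
  refine le_antisymm (Nat.sInf_le hmem) (le_csInf ⟨_, hmem⟩ ?_)
  rintro k ⟨m, φ, hφ⟩
  have := le_two_mul_of_cycleGraph_isometry hn φ hφ
  omega
end
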